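/- arXiv:2201.08312 — 5 statements merged into one kernel-verified Lean document; each statement's English description precedes it below -/
import Mathlib

section
/- Let H be a finitely generated subgroup of a finitely generated group G. Then the generalized distortion function satisfies Δ_H^G(n)/Δ_H^G(m) ⪯ μ_H^G(m, n) ⪯ Δ_H^G(n)/∇_H^G(m). Precisely, with a finite generating set X of G containing a finite generating set Y of H: (i) μ_H^{G,X}(m, n) ≥ ⌈Δ_{H,Y}^{G,X}(n)/Δ_{H,Y}^{G,X}(m)⌉, and (ii) μ_H^{G,X}(m, n) ≤ ⌈Δ_{H,Y}^{G,X}(n)/(∇_{H,Y}^{G,X}(m) − 1)⌉ whenever ∇_{H,Y}^{G,X}(m) > 1. -/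
variable {G : Type*} [Group G]

/-- `g` is a product of `k` elements of `A ∪ A⁻¹`. -/
def IsWord (A : Set G) (k : ℕ) (g : G) : Prop :=
  ∃ l : List G, l.length = k ∧ (∀ x ∈ l, x ∈ A ∨ x⁻¹ ∈ A) ∧ l.prod = g

/-- Word length of `g` with respect to the generating set `A`. -/
noncomputable def wlen (A : Set G) (g : G) : ℕ :=
  sInf {k : ℕ | IsWord A k g}

/-- Distortion function `Δ_{H,Y}^{G,X}(n) = max { |h|_Y : h ∈ H, |h|_X ≤ n }`. -/
noncomputable def distortion (X Y : Set G) (H : Subgroup G) (n : ℕ) : ℕ :=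
  sSup (wlen Y '' {g : G | g ∈ H ∧ wlen X g ≤ n})

/-- Lower distortion function `∇_{H,Y}^{G,X}(n) = min { |h|_Y : h ∈ H, |h|_X > n }`. -/
noncomputable def lowerDistortion (X Y : Set G) (H : Subgroup G) (n : ℕ) : ℕ :=
  sInf (wlen Y '' {g : G | g ∈ H ∧ n < wlen X g})

/-- Generalized distortion `μ_H^{G,X}(m,n) = max { |h|_{Y_m} : h ∈ H, |h|_X ≤ n }`,
where `Y_m = { h ∈ H : |h|_X ≤ m }`. -/
noncomputable def genDistortion (X : Set G) (H : Subgroup G) (m n : ℕ) : ℕ :=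
  sSup (wlen {h : G | h ∈ H ∧ wlen X h ≤ m} '' {g : G | g ∈ H ∧ wlen X g ≤ n})




variable {A : Set G} {g g₁ g₂ : G} {k k₁ k₂ : ℕ}

lemma isWord_one (A : Set G) : IsWord A 0 (1 : G) := ⟨[], rfl, by simp, rfl⟩

lemma IsWord.one_eq (h : IsWord A 0 g) : g = 1 := by
  obtain ⟨l, hl, -, hp⟩ := h
  rw [List.length_eq_zero_iff] at hl; subst hl; simpa using hp.symm

lemma IsWord.wlen_le (h : IsWord A k g) : wlen A g ≤ k := Nat.sInf_le h

lemma isWord_wlen (h : ∃ k, IsWord A k g) : IsWord A (wlen A g) g := Nat.sInf_mem h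

lemma wlen_one (A : Set G) : wlen A (1 : G) = 0 :=
  Nat.le_zero.mp (isWord_one A).wlen_le

lemma IsWord.mul (h₁ : IsWord A k₁ g₁) (h₂ : IsWord A k₂ g₂) :
    IsWord A (k₁ + k₂) (g₁ * g₂) := by
  obtain ⟨l₁, hl₁, hm₁, hp₁⟩ := h₁
  obtain ⟨l₂, hl₂, hm₂, hp₂⟩ := h₂
  refine ⟨l₁ ++ l₂, by simp [hl₁, hl₂], ?_, by simp [hp₁, hp₂]⟩
  intro x hx
  rcases List.mem_append.mp hx with h | h
  exacts [hm₁ x h, hm₂ x h]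

lemma IsWord.inv (h : IsWord A k g) : IsWord A k g⁻¹ := by
  obtain ⟨l, hl, hm, hp⟩ := h
  refine ⟨(l.map fun x => x⁻¹).reverse, by simp [hl], ?_, ?_⟩
  · intro x hx
    simp only [List.mem_reverse, List.mem_map] at hx
    obtain ⟨y, hy, rfl⟩ := hx
    rcases hm y hy with h | h
    · right; simpa
    · left; exact h
  · rw [← hp, ← List.prod_inv_reverse]

lemma wlen_inv (A : Set G) (g : G) : wlen A g⁻¹ = wlen A g := by
  unfold wlen
  congr 1
  ext k
  exact ⟨fun h => by simpa using h.inv, fun h => h.inv⟩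

lemma IsWord.mem_closure (h : IsWord A k g) : g ∈ Subgroup.closure A := by
  obtain ⟨l, -, hm, hp⟩ := h
  rw [← hp]
  refine list_prod_mem fun x hx => ?_
  rcases hm x hx with h | h
  · exact Subgroup.subset_closure h
  · simpa using inv_mem (Subgroup.subset_closure h)

lemma exists_isWord_of_mem_closure (h : g ∈ Subgroup.closure A) : ∃ k, IsWord A k g := by
  induction h using Subgroup.closure_induction with
  | mem x hx => exact ⟨1, [x], rfl, fun y hy => by simp at hy; subst hy; exact Or.inl hx, by simp⟩
  | one => exact ⟨0, isWord_one A⟩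
  | mul x y _ _ hx hy => obtain ⟨k₁, h₁⟩ := hx; obtain ⟨k₂, h₂⟩ := hy; exact ⟨k₁ + k₂, h₁.mul h₂⟩
  | inv x _ hx => obtain ⟨k₁, h₁⟩ := hx; exact ⟨k₁, h₁.inv⟩

lemma finite_isWord (hA : A.Finite) (k : ℕ) : {g : G | IsWord A k g}.Finite := by
  induction k with
  | zero =>
    exact Set.Finite.subset (Set.finite_singleton 1) fun g hg => hg.one_eq
  | succ k ih =>
    have hS : {x : G | x ∈ A ∨ x⁻¹ ∈ A}.Finite := by
      have : {x : G | x ∈ A ∨ x⁻¹ ∈ A} ⊆ A ∪ (fun x : G => x⁻¹) '' A := by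
        rintro x (hx | hx)
        · exact Or.inl hx
        · exact Or.inr ⟨x⁻¹, hx, by simp⟩
      exact (hA.union (hA.image _)).subset this
    refine (Set.Finite.image2 (· * ·) hS ih).subset ?_
    rintro g ⟨l, hl, hm, hp⟩
    cases l with
    | nil => simp at hl
    | cons x l' =>
      refine ⟨x, hm x (by simp), l'.prod, ⟨l', by simpa using hl, fun y hy => hm y (by simp [hy]), rfl⟩, by simpa using hp⟩

lemma finite_ball (hA : A.Finite) (hgen : ∀ g : G, ∃ k, IsWord A k g) (n : ℕ) :
    {g : G | wlen A g ≤ n}.Finite := by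
  refine ((Set.finite_Iic n).biUnion (fun k _ => finite_isWord hA k)).subset ?_
  intro g hg
  exact Set.mem_biUnion hg (isWord_wlen (hgen g))



/-- `Δ_H^G(n)/Δ_H^G(m) ⪯ μ_H^G(m,n) ⪯ Δ_H^G(n)/∇_H^G(m)`, in the precise
ceiling form: `⌈Δ(n)/Δ(m)⌉ ≤ μ(m,n)` and `μ(m,n) ≤ ⌈Δ(n)/(∇(m)-1)⌉` when `∇(m) > 1`. -/
theorem genDistortion_bounds {G : Type*} [Group G] (X Y : Set G) (H : Subgroup G)
    (hXfin : X.Finite) (hYfin : Y.Finite) (hYX : Y ⊆ X)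
    (hXgen : Subgroup.closure X = ⊤) (hYH : Y ⊆ (H : Set G))
    (hYgen : Subgroup.closure Y = H) (m n : ℕ) :
    (⌈(distortion X Y H n : ℚ) / (distortion X Y H m : ℚ)⌉ ≤ (genDistortion X H m n : ℤ)) ∧
    (1 < lowerDistortion X Y H m →
      (genDistortion X H m n : ℤ) ≤
        ⌈(distortion X Y H n : ℚ) / ((lowerDistortion X Y H m : ℚ) - 1)⌉) := by
  classical
  have hXw : ∀ g : G, ∃ k, IsWord X k g := fun g =>
    exists_isWord_of_mem_closure (by rw [hXgen]; trivial)
  have hYw : ∀ g ∈ H, ∃ k, IsWord Y k g := fun g hg =>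
    exists_isWord_of_mem_closure (show g ∈ Subgroup.closure Y from hYgen ▸ hg)
  have hwx1 : ∀ g : G, (g ∈ X ∨ g⁻¹ ∈ X) → wlen X g ≤ 1 := fun g hg =>
    IsWord.wlen_le ⟨[g], rfl, by simpa using hg, by simp⟩
  have hX0 : ∀ g : G, wlen X g = 0 → g = 1 := fun g h =>
    IsWord.one_eq (h ▸ isWord_wlen (hXw g))
  set Ym : Set G := {h : G | h ∈ H ∧ wlen X h ≤ m} with hYmdef
  have hYmH : ∀ x : G, (x ∈ Ym ∨ x⁻¹ ∈ Ym) → x ∈ H ∧ wlen X x ≤ m := by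
    rintro x (⟨h1, h2⟩ | ⟨h1, h2⟩)
    · exact ⟨h1, h2⟩
    · exact ⟨by simpa using inv_mem h1, by rwa [← wlen_inv X x]⟩
  have hYmemH : ∀ x : G, (x ∈ Y ∨ x⁻¹ ∈ Y) → x ∈ H := by
    rintro x (h | h)
    · exact hYH h
    · simpa using inv_mem (hYH h)
  have Sfin : ∀ N : ℕ, {g : G | g ∈ H ∧ wlen X g ≤ N}.Finite := fun N =>
    (finite_ball hXfin hXw N).subset fun g hg => hg.2
  have hD : ∀ N : ℕ, ∀ g ∈ H, wlen X g ≤ N → wlen Y g ≤ distortion X Y H N := fun N g hg hgn =>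
    le_csSup ((Sfin N).image _).bddAbove ⟨g, ⟨hg, hgn⟩, rfl⟩
  have hμdef : genDistortion X H m n = sSup (wlen Ym '' {g : G | g ∈ H ∧ wlen X g ≤ n}) := rfl
  have hμ : ∀ g ∈ H, wlen X g ≤ n → wlen Ym g ≤ genDistortion X H m n := fun g hg hgn => by
    rw [hμdef]; exact le_csSup ((Sfin n).image _).bddAbove ⟨g, ⟨hg, hgn⟩, rfl⟩
  constructor
  · -- Part (i)
    rcases Nat.eq_zero_or_pos (distortion X Y H m) with hDm | hDm
    · rw [hDm]
      simp only [Nat.cast_zero, div_zero, Int.ceil_zero]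
      positivity
    · have hm1 : 1 ≤ m := by
        rcases Nat.eq_zero_or_pos m with rfl | h
        · exfalso
          have hz : distortion X Y H 0 = 0 := by
            refine Nat.le_zero.mp (csSup_le' ?_)
            rintro k ⟨g, ⟨hgH, hg0⟩, rfl⟩
            have hg1 : g = 1 := hX0 g (Nat.le_zero.mp hg0)
            simp [hg1, wlen_one]
          omega
        · exact h
      have hYYm : Y ⊆ Ym := fun y hy =>
        ⟨hYH hy, le_trans (hwx1 y (Or.inl (hYX hy))) hm1⟩
      have listkey : ∀ l : List G, (∀ x ∈ l, x ∈ Ym ∨ x⁻¹ ∈ Ym) →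
          wlen Y l.prod ≤ l.length * distortion X Y H m := by
        intro l
        induction l with
        | nil => intro _; simp [wlen_one]
        | cons a t ih =>
          intro hmem
          have ha := hYmH a (hmem a (by simp))
          have htH : t.prod ∈ H := list_prod_mem fun x hx => (hYmH x (hmem x (by simp [hx]))).1
          have h1 : wlen Y (a * t.prod) ≤ wlen Y a + wlen Y t.prod := by
            have w1 := isWord_wlen (hYw a ha.1)
            have w2 := isWord_wlen (hYw t.prod htH)
            exact (w1.mul w2).wlen_le
          have h2 : wlen Y a ≤ distortion X Y H m := hD m a ha.1 ha.2
          have h3 := ih fun x hx => hmem x (by simp [hx])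
          calc wlen Y (a :: t).prod = wlen Y (a * t.prod) := by rw [List.prod_cons]
            _ ≤ wlen Y a + wlen Y t.prod := h1
            _ ≤ distortion X Y H m + t.length * distortion X Y H m := add_le_add h2 h3
            _ = (a :: t).length * distortion X Y H m := by rw [List.length_cons]; ring
      have hDle : distortion X Y H n ≤ genDistortion X H m n * distortion X Y H m := by
        refine csSup_le' ?_
        rintro k ⟨g, ⟨hgH, hgn⟩, rfl⟩
        have hgYm : g ∈ Subgroup.closure Ym :=
          Subgroup.closure_mono hYYm (show g ∈ Subgroup.closure Y from hYgen ▸ hgH)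
        obtain ⟨l, hl, hmem, hprod⟩ := isWord_wlen (exists_isWord_of_mem_closure hgYm)
        calc wlen Y g = wlen Y l.prod := by rw [hprod]
          _ ≤ l.length * distortion X Y H m := listkey l hmem
          _ = wlen Ym g * distortion X Y H m := by rw [hl]
          _ ≤ genDistortion X H m n * distortion X Y H m :=
            Nat.mul_le_mul_right _ (hμ g hgH hgn)
      rw [Int.ceil_le, div_le_iff₀ (by exact_mod_cast hDm)]
      exact_mod_cast hDle
  · -- Part (ii)
    intro hna
    set L := lowerDistortion X Y H m with hLdef
    set d := L - 1 with hddef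
    have hd1 : 1 ≤ d := by omega
    have hspec : ∀ g ∈ H, m < wlen X g → L ≤ wlen Y g := fun g hg hgt =>
      Nat.sInf_le ⟨g, ⟨hg, hgt⟩, rfl⟩
    have hm1 : 1 ≤ m := by
      rcases Nat.eq_zero_or_pos m with rfl | h
      · exfalso
        have hne : (wlen Y '' {g : G | g ∈ H ∧ 0 < wlen X g}).Nonempty := by
          by_contra hemp
          rw [Set.not_nonempty_iff_eq_empty] at hemp
          have : L = 0 := by rw [hLdef]; unfold lowerDistortion; rw [hemp]; simp
          omega
        obtain ⟨k, g, ⟨hgH, hgp⟩, rfl⟩ := hne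
        have hg1 : g ≠ 1 := fun h => by simp [h, wlen_one] at hgp
        have hy : ∃ y ∈ Y, y ≠ (1 : G) := by
          by_contra hy
          push_neg at hy
          have : g ∈ Subgroup.closure Y := hYgen ▸ hgH
          have hle : Subgroup.closure Y ≤ ⊥ := by
            rw [Subgroup.closure_le]
            intro y hyY
            simp [hy y hyY]
          exact hg1 (Subgroup.mem_bot.mp (hle this))
        obtain ⟨y, hyY, hy1⟩ := hy
        have hyX' : 0 < wlen X y := by
          rcases Nat.eq_zero_or_pos (wlen X y) with h0 | h0
          · exact absurd (hX0 y h0) hy1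
          · exact h0
        have h1 : L ≤ wlen Y y := hspec y (hYH hyY) hyX'
        have h2 : wlen Y y ≤ 1 := IsWord.wlen_le ⟨[y], rfl, by simp [hyY], by simp⟩
        omega
      · exact h
    -- key combinatorial lemma: greedy block decomposition
    have block : ∀ N : ℕ, ∀ l : List G, l.length ≤ N → (∀ x ∈ l, x ∈ Y ∨ x⁻¹ ∈ Y) →
        ∃ s, IsWord Ym s l.prod ∧ d * s ≤ l.length + (d - 1) := by
      intro N
      induction N with
      | zero =>
        intro l hl _
        have : l = [] := List.length_eq_zero_iff.mp (Nat.le_zero.mp hl)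
        subst this
        exact ⟨0, by simpa using isWord_one Ym, by simp⟩
      | succ N ih =>
        intro l hl hmem
        rcases eq_or_ne l [] with rfl | hne
        · exact ⟨0, by simpa using isWord_one Ym, by simp⟩
        have hlen1 : 1 ≤ l.length := List.length_pos_iff.mpr hne
        set P : ℕ → Prop := fun t => wlen X ((l.take t).prod) ≤ m with hPdef
        have hP1 : P 1 := by
          obtain ⟨a, t, rfl⟩ := List.exists_cons_of_ne_nil hne
          have : ((a :: t).take 1).prod = a := by simp
          rw [hPdef]
          simp only [this]
          exact le_trans (hwx1 a ((hmem a (by simp)).imp (fun h => hYX h) fun h => hYX h)) hm1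
        set t₀ := Nat.findGreatest P l.length with ht₀def
        have ht1 : 1 ≤ t₀ := Nat.le_findGreatest hlen1 hP1
        have ht₀le : t₀ ≤ l.length := Nat.findGreatest_le _
        have hPt₀ : P t₀ := Nat.findGreatest_spec hlen1 hP1
        have hbH : (l.take t₀).prod ∈ H :=
          list_prod_mem fun x hx => hYmemH x (hmem x (List.mem_of_mem_take hx))
        have hb : IsWord Ym 1 ((l.take t₀).prod) :=
          ⟨[(l.take t₀).prod], rfl, fun x hx => by
            simp only [List.mem_singleton] at hx
            subst hx
            exact Or.inl ⟨hbH, hPt₀⟩, by simp⟩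
        rcases eq_or_lt_of_le ht₀le with heq | hlt
        · refine ⟨1, ?_, by omega⟩
          rw [heq, List.take_length] at hb
          exact hb
        · have hdle : d ≤ t₀ := by
            have hnP : ¬ P (t₀ + 1) :=
              Nat.findGreatest_is_greatest (Nat.lt_succ_self _) hlt
            have hgX : m < wlen X ((l.take (t₀ + 1)).prod) := by
              rw [hPdef] at hnP; omega
            have hgH : (l.take (t₀ + 1)).prod ∈ H :=
              list_prod_mem fun x hx => hYmemH x (hmem x (List.mem_of_mem_take hx))
            have h1 : L ≤ wlen Y ((l.take (t₀ + 1)).prod) := hspec _ hgH hgX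
            have h2 : wlen Y ((l.take (t₀ + 1)).prod) ≤ t₀ + 1 :=
              IsWord.wlen_le ⟨l.take (t₀ + 1), by
                rw [List.length_take]; omega,
                fun x hx => hmem x (List.mem_of_mem_take hx), rfl⟩
            omega
          have hrlen : (l.drop t₀).length ≤ N := by
            rw [List.length_drop]; omega
          obtain ⟨s', hs'w, hs'b⟩ := ih (l.drop t₀) hrlen
            (fun x hx => hmem x (List.mem_of_mem_drop hx))
          refine ⟨1 + s', ?_, ?_⟩
          · have := hb.mul hs'w
            rwa [← List.prod_append, List.take_append_drop] at this
          · have hll : l.length = t₀ + (l.drop t₀).length := by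
              rw [List.length_drop]; omega
            have : d * (1 + s') = d + d * s' := by ring
            omega
    have hkey : ∀ g ∈ H, wlen X g ≤ n → d * wlen Ym g < distortion X Y H n + d := by
      intro g hg hgn
      obtain ⟨l, hl, hmem, hprod⟩ := isWord_wlen (hYw g hg)
      obtain ⟨s, hsw, hsb⟩ := block l.length l le_rfl hmem
      have h1 : wlen Ym g ≤ s := by rw [← hprod]; exact hsw.wlen_le
      have h2 : wlen Y g ≤ distortion X Y H n := hD n g hg hgn
      calc d * wlen Ym g ≤ d * s := Nat.mul_le_mul_left d h1
        _ ≤ l.length + (d - 1) := hsb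
        _ = wlen Y g + (d - 1) := by rw [hl]
        _ < distortion X Y H n + d := by omega
    set C : ℤ := ⌈(distortion X Y H n : ℚ) / ((L : ℚ) - 1)⌉ with hCdef
    have hL1 : (1 : ℚ) ≤ (L : ℚ) := by exact_mod_cast hna.le
    have hdq : (d : ℚ) = (L : ℚ) - 1 := by
      rw [hddef, Nat.cast_sub (by omega)]; simp
    have hdpos : (0 : ℚ) < (L : ℚ) - 1 := by
      have : (2 : ℚ) ≤ (L : ℚ) := by exact_mod_cast hna
      linarith
    have hC0 : 0 ≤ C := Int.ceil_nonneg (div_nonneg (by positivity) hdpos.le)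
    have hub : ∀ g ∈ H, wlen X g ≤ n → (wlen Ym g : ℤ) ≤ C := by
      intro g hg hgn
      have h1 := hkey g hg hgn
      have h2 : ((wlen Ym g : ℚ) - 1) * ((L : ℚ) - 1) < (distortion X Y H n : ℚ) := by
        rw [← hdq]
        have : (d : ℚ) * (wlen Ym g : ℚ) < (distortion X Y H n : ℚ) + (d : ℚ) := by
          exact_mod_cast h1
        ring_nf
        nlinarith [this]
      have h3 : (wlen Ym g : ℚ) - 1 < (distortion X Y H n : ℚ) / ((L : ℚ) - 1) :=
        (lt_div_iff₀ hdpos).mpr h2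
      have h4 : (distortion X Y H n : ℚ) / ((L : ℚ) - 1) ≤ (C : ℚ) := Int.le_ceil _
      have : (wlen Ym g : ℚ) < (C : ℚ) + 1 := by linarith
      have : (wlen Ym g : ℤ) < C + 1 := by exact_mod_cast this
      omega
    have hμle : genDistortion X H m n ≤ C.toNat := by
      rw [hμdef]
      refine csSup_le' ?_
      rintro k ⟨g, ⟨hgH, hgn⟩, rfl⟩
      have := hub g hgH hgn
      omega
    have : (genDistortion X H m n : ℤ) ≤ (C.toNat : ℤ) := by exact_mod_cast hμle
    omega
end

section
/- Let r > 0 and let (S, s) be a pointed proper r-connected metric space whose asymptotic cones are all transitive. Suppose there exists a constant K such that ν_S(i, 4i) ≤ K for all real i ≥ r. Then for any non-principal ultrafilter ω and any two points p, q in the asymptotic cone Cone^ω(S), there exist K+1 points p = p_0, p_1, ..., p_K = q in Cone^ω(S) such that d^ω(p_j, p_{j+1}) ≤ d^ω(p, q)/2 for all 0 ≤ j < K. -/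
open Filter

/-- A chain (m-path) of length `k` from `a` to `b`. -/
def IsRPath {S : Type*} [MetricSpace S] (m : ℝ) (k : ℕ) (a b : S) (c : ℕ → S) : Prop :=
  c 0 = a ∧ c k = b ∧ ∀ i < k, dist (c i) (c (i + 1)) ≤ m

/-- `|t|_m`: the minimal length of an `m`-path from `s` to `t`. -/
noncomputable def pathLen {S : Type*} [MetricSpace S] (s : S) (m : ℝ) (t : S) : ℕ :=
  sInf {k : ℕ | ∃ c : ℕ → S, IsRPath m k s t c}

/-- `ν_S(m, n) = max { |t|_m : d(s,t) ≤ n }`. -/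
noncomputable def nu {S : Type*} [MetricSpace S] (s : S) (m n : ℝ) : ℕ :=
  sSup (pathLen s m '' {t : S | dist s t ≤ n})

/-- An ultrafilter on `ℕ` is non-principal iff it contains the cofinite filter. -/
def Nonprincipal (ω : Ultrafilter ℕ) : Prop := (ω : Filter ℕ) ≤ Filter.cofinite

/-- Admissible sequences for the asymptotic cone with scaling sequence `cᵢ = i`:
sequences at bounded scaled distance from the observation point `s`. The
ultrafilter `ω` is a parameter fixing the pseudometric below. -/
structure Precone (S : Type*) [MetricSpace S] (s : S) (ω : Ultrafilter ℕ) : Type _ where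
  seq : ℕ → S
  bounded : ∃ B : ℝ, ∀ i : ℕ, 1 ≤ i → dist s (seq i) ≤ B * i

namespace Precone

variable {S : Type*} [MetricSpace S] {s : S} {ω : Ultrafilter ℕ}

lemma bounded_div (x y : Precone S s ω) :
    ∃ B : ℝ, ∀ i : ℕ, dist (x.seq i) (y.seq i) / i ∈ Set.Icc (0:ℝ) B := by
  obtain ⟨Bx, hBx⟩ := x.bounded
  obtain ⟨By, hBy⟩ := y.bounded
  refine ⟨max (Bx + By) 0, fun i => ⟨by positivity, ?_⟩⟩
  rcases Nat.eq_zero_or_pos i with h | h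
  · simp [h, le_max_right]
  · have hi : (0:ℝ) < i := by exact_mod_cast h
    have h1 : dist (x.seq i) (y.seq i) ≤ (Bx + By) * i := by
      calc dist (x.seq i) (y.seq i) ≤ dist s (x.seq i) + dist s (y.seq i) :=
            dist_triangle_left _ _ _
        _ ≤ Bx * i + By * i := add_le_add (hBx i h) (hBy i h)
        _ = (Bx + By) * i := by ring
    have h2 : dist (x.seq i) (y.seq i) / i ≤ ((Bx + By) * i) / i := by gcongr
    have h3 : ((Bx + By) * i : ℝ) / i = Bx + By := mul_div_cancel_right₀ _ (ne_of_gt hi)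
    rw [h3] at h2
    exact le_trans h2 (le_max_left _ _)

/-- The `ω`-limit defining the cone pseudometric exists. -/
lemma tendsto_pdist (x y : Precone S s ω) :
    Tendsto (fun i => dist (x.seq i) (y.seq i) / i) (ω : Filter ℕ)
      (nhds (limUnder (ω : Filter ℕ) (fun i => dist (x.seq i) (y.seq i) / i))) := by
  obtain ⟨B, hB⟩ := bounded_div x y
  have hle : (ω.map (fun i => dist (x.seq i) (y.seq i) / i) : Filter ℝ) ≤
      Filter.principal (Set.Icc 0 B) := by
    rw [Filter.le_principal_iff]
    exact Filter.mem_map.2 (Filter.univ_mem' hB)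
  obtain ⟨c, -, hc⟩ := isCompact_Icc.ultrafilter_le_nhds
    (ω.map (fun i => dist (x.seq i) (y.seq i) / i)) hle
  exact tendsto_nhds_limUnder ⟨c, hc⟩

end Precone

/-- The pseudometric `d^ω((xᵢ),(yᵢ)) = limᵂ d(xᵢ,yᵢ)/i` on admissible sequences. -/
noncomputable instance preconePseudoMetric (S : Type*) [MetricSpace S] (s : S)
    (ω : Ultrafilter ℕ) : PseudoMetricSpace (Precone S s ω) where
  dist x y := limUnder (ω : Filter ℕ) (fun i => dist (x.seq i) (y.seq i) / i)
  dist_self x := by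
    have h : (fun i : ℕ => dist (x.seq i) (x.seq i) / i) = fun _ => (0 : ℝ) := by
      funext i; simp
    show limUnder (ω : Filter ℕ) _ = 0
    rw [h]
    exact tendsto_const_nhds.limUnder_eq
  dist_comm x y := by
    show limUnder _ _ = limUnder _ _
    congr 1
    funext i
    rw [dist_comm]
  dist_triangle x y z := by
    show limUnder (ω : Filter ℕ) _ ≤ limUnder _ _ + limUnder _ _
    have hxz := x.tendsto_pdist z
    have hxy := x.tendsto_pdist y
    have hyz := y.tendsto_pdist z
    refine le_of_tendsto_of_tendsto hxz (hxy.add hyz) (Filter.univ_mem' fun i => ?_)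
    have h1 : dist (x.seq i) (z.seq i) ≤
        dist (x.seq i) (y.seq i) + dist (y.seq i) (z.seq i) := dist_triangle _ _ _
    have hi : (0:ℝ) ≤ i := Nat.cast_nonneg i
    calc dist (x.seq i) (z.seq i) / i
        ≤ (dist (x.seq i) (y.seq i) + dist (y.seq i) (z.seq i)) / i := by
          rcases eq_or_lt_of_le hi with h | h
          · simp [← h]
          · gcongr
      _ = dist (x.seq i) (y.seq i) / i + dist (y.seq i) (z.seq i) / i := add_div _ _ _

/-- The asymptotic cone of `(S, s)` with respect to `ω` (scaling `cᵢ = i`): the metric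
quotient of the admissible sequences by the pseudometric `d^ω`. -/
abbrev Cone (S : Type*) [MetricSpace S] (s : S) (ω : Ultrafilter ℕ) : Type _ :=
  SeparationQuotient (Precone S s ω)

/-!
Transitivity of the cone lets us move `p` to the base point `[s]`, so `q` is represented by a
sequence `yᵢ` with `d(s, yᵢ) ≤ 2 d^ω(p, q) i` for `ω`-almost every `i`. Writing
`mᵢ = d^ω(p, q) i / 2`, these `yᵢ` lie in the ball of radius `4 mᵢ`, and `mᵢ ≥ r` eventually,
so the bound on `ν` gives `mᵢ`-chains of length `K` from `s` to `yᵢ`. Rescaled by `i`, their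
`j`-th points form a chain of `K + 1` points in the cone with steps at most `d^ω(p, q) / 2`.
-/

section Chains

variable {S : Type*} [MetricSpace S]

lemma IsRPath.mono {m m' : ℝ} (h : m ≤ m') {k : ℕ} {a b : S} {c : ℕ → S}
    (hc : IsRPath m k a b c) : IsRPath m' k a b c :=
  ⟨hc.1, hc.2.1, fun i hi => (hc.2.2 i hi).trans h⟩

lemma IsRPath.snoc {m : ℝ} {k : ℕ} {a b b' : S} {c : ℕ → S} (hc : IsRPath m k a b c)
    (hb : dist b b' ≤ m) : IsRPath m (k + 1) a b' (Function.update c (k + 1) b') := by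
  refine ⟨by simpa using hc.1, by simp, fun i hi => ?_⟩
  rcases Nat.lt_succ_iff_lt_or_eq.1 hi with hi | rfl
  · simpa [Function.update_of_ne (by omega : i ≠ k + 1),
      Function.update_of_ne (by omega : i + 1 ≠ k + 1)] using hc.2.2 i hi
  · simpa [Function.update_of_ne (by omega : i ≠ i + 1), hc.2.1] using hb

lemma IsRPath.extend {m : ℝ} (hm : 0 ≤ m) {k K : ℕ} (hkK : k ≤ K) {a b : S} {c : ℕ → S}
    (hc : IsRPath m k a b c) : IsRPath m K a b (fun j => c (min j k)) := by
  refine ⟨by simpa using hc.1, by simpa [min_eq_right hkK] using hc.2.1, fun j _ => ?_⟩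
  rcases lt_or_ge j k with hj | hj
  · simpa [min_eq_left hj.le, min_eq_left (Nat.succ_le_of_lt hj)] using hc.2.2 j hj
  · simpa [min_eq_right hj, min_eq_right (hj.trans j.le_succ)] using hm

lemma dist_le_mul_of_forall_dist_succ_le {m : ℝ} {k j : ℕ} {c : ℕ → S}
    (hc : ∀ i < k, dist (c i) (c (i + 1)) ≤ m) (hj : j ≤ k) : dist (c 0) (c j) ≤ j * m := by
  simpa using dist_le_range_sum_of_dist_le (f := c) (d := fun _ => m) j
    fun hi => hc _ (hi.trans_le hj)

lemma IsRPath.pathLen_le {s t : S} {m : ℝ} {k : ℕ} {c : ℕ → S} (hc : IsRPath m k s t c) :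
    pathLen s m t ≤ k :=
  Nat.sInf_le ⟨c, hc⟩

lemma exists_isRPath_pathLen {s t : S} {m : ℝ} (h : ∃ k c, IsRPath m k s t c) :
    ∃ c, IsRPath m (pathLen s m t) s t c :=
  Nat.sInf_mem h

lemma pathLen_le_pathLen_add_one {s t u : S} {m : ℝ} (ht : ∃ k c, IsRPath m k s t c)
    (htu : dist t u ≤ m) : pathLen s m u ≤ pathLen s m t + 1 := by
  obtain ⟨c, hc⟩ := exists_isRPath_pathLen ht
  exact (hc.snoc htu).pathLen_le

/-- Finitely many `m`-balls cover a closed ball, and `|·|_m` grows by at most one inside each. -/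
lemma bddAbove_pathLen_image [ProperSpace S] {s : S} {m : ℝ} (hm : 0 < m)
    (hconn : ∀ t : S, ∃ k c, IsRPath m k s t c) (n : ℝ) :
    BddAbove (pathLen s m '' {t : S | dist s t ≤ n}) := by
  obtain ⟨T, hT⟩ := (isCompact_closedBall s n).elim_finite_subcover (fun u => Metric.ball u m)
    (fun _ => Metric.isOpen_ball) fun u _ => Set.mem_iUnion.2 ⟨u, Metric.mem_ball_self hm⟩
  refine ⟨T.sup (pathLen s m) + 1, ?_⟩
  rintro _ ⟨t, ht, rfl⟩
  obtain ⟨u, huT, hut⟩ := Set.mem_iUnion₂.1 (hT (Metric.mem_closedBall'.2 ht))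
  exact (pathLen_le_pathLen_add_one (hconn u) (Metric.mem_ball'.1 hut).le).trans
    (Nat.add_le_add_right (Finset.le_sup huT) 1)

lemma pathLen_le_nu [ProperSpace S] {s t : S} {m n : ℝ} (hm : 0 < m)
    (hconn : ∀ t : S, ∃ k c, IsRPath m k s t c) (ht : dist s t ≤ n) :
    pathLen s m t ≤ nu s m n :=
  le_csSup (bddAbove_pathLen_image hm hconn n) ⟨t, ht, rfl⟩

lemma exists_isRPath_nu [ProperSpace S] {s t : S} {r m n : ℝ} (hr : 0 < r)
    (hconn : ∀ t : S, ∃ k c, IsRPath r k s t c) (hrm : r ≤ m) (ht : dist s t ≤ n) :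
    ∃ c, IsRPath m (nu s m n) s t c := by
  have hconn' : ∀ t : S, ∃ k c, IsRPath m k s t c := fun t => by
    obtain ⟨k, c, hc⟩ := hconn t
    exact ⟨k, c, hc.mono hrm⟩
  obtain ⟨c, hc⟩ := exists_isRPath_pathLen (hconn' t)
  exact ⟨_, hc.extend (hr.le.trans hrm) (pathLen_le_nu (hr.trans_le hrm) hconn' ht)⟩

end Chains

lemma Nonprincipal.tendsto_natCast {ω : Ultrafilter ℕ} (hω : Nonprincipal ω) :
    Tendsto (Nat.cast : ℕ → ℝ) (ω : Filter ℕ) atTop :=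
  tendsto_natCast_atTop_atTop.mono_left (Nat.cofinite_eq_atTop ▸ hω)

namespace Precone

variable {S : Type*} [MetricSpace S] {s : S} {ω : Ultrafilter ℕ}

def basepoint : Precone S s ω := ⟨fun _ => s, 0, fun _ _ => by simp⟩

lemma bounded_of_dist_le (x : Precone S s ω) {z : ℕ → S} {B : ℝ}
    (h : ∀ i, dist (x.seq i) (z i) ≤ B * i) : ∃ B : ℝ, ∀ i : ℕ, 1 ≤ i → dist s (z i) ≤ B * i := by
  obtain ⟨Bx, hBx⟩ := x.bounded
  exact ⟨Bx + B, fun i hi => (dist_triangle _ _ _).trans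
    (by linarith [hBx i hi, h i])⟩

lemma dist_le_of_eventually_le {x y : Precone S s ω} {C : ℝ} (hC : 0 ≤ C)
    (h : ∀ᶠ i in (ω : Filter ℕ), dist (x.seq i) (y.seq i) ≤ C * i) : dist x y ≤ C := by
  refine le_of_tendsto (x.tendsto_pdist y) (h.mono fun i hi => ?_)
  rcases (Nat.cast_nonneg i : (0 : ℝ) ≤ i).eq_or_lt with hi0 | hi0
  · simpa [← hi0] using hC
  · exact (div_le_iff₀ hi0).2 hi

lemma mk_eq_mk_of_eventuallyEq {x y : Precone S s ω} (h : x.seq =ᶠ[(ω : Filter ℕ)] y.seq) :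
    SeparationQuotient.mk x = SeparationQuotient.mk y :=
  SeparationQuotient.mk_eq_mk.2 <| Metric.inseparable_iff.2 <|
    le_antisymm (dist_le_of_eventually_le le_rfl (h.mono fun i hi => by simp [hi])) dist_nonneg

lemma eventually_dist_le_of_dist_lt (hω : Nonprincipal ω) {x y : Precone S s ω} {C : ℝ}
    (h : dist x y < C) : ∀ᶠ i in (ω : Filter ℕ), dist (x.seq i) (y.seq i) ≤ C * i := by
  filter_upwards [(x.tendsto_pdist y).eventually_lt_const h,
    hω.tendsto_natCast.eventually_gt_atTop 0] with i hlt hi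
  exact ((div_lt_iff₀ hi).1 hlt).le

theorem exists_chain_of_eventually_isRPath (x y : Precone S s ω) {C : ℝ} (hC : 0 ≤ C) (K : ℕ)
    (h : ∀ᶠ i : ℕ in (ω : Filter ℕ), ∃ c, IsRPath (C * i) K (x.seq i) (y.seq i) c) :
    ∃ c : ℕ → Cone S s ω, c 0 = SeparationQuotient.mk x ∧ c K = SeparationQuotient.mk y ∧
      ∀ j < K, dist (c j) (c (j + 1)) ≤ C := by
  have hpath : ∀ i, ∃ c : ℕ → S, c 0 = x.seq i ∧ (∀ j < K, dist (c j) (c (j + 1)) ≤ C * i) ∧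
      ((∃ c, IsRPath (C * i) K (x.seq i) (y.seq i) c) → c K = y.seq i) := fun i => by
    by_cases hi : ∃ c, IsRPath (C * i) K (x.seq i) (y.seq i) c
    · obtain ⟨c, hc0, hcK, hc⟩ := hi
      exact ⟨c, hc0, hc, fun _ => hcK⟩
    · exact ⟨fun _ => x.seq i, rfl, fun _ _ => by rw [dist_self]; positivity,
        fun h' => absurd h' hi⟩
  choose c hc0 hstep hcK using hpath
  have hdist : ∀ i j, dist (x.seq i) (c i (min j K)) ≤ K * C * i := fun i j => by
    calc dist (x.seq i) (c i (min j K)) ≤ (min j K : ℕ) * (C * i) :=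
          hc0 i ▸ dist_le_mul_of_forall_dist_succ_le (hstep i) (min_le_right j K)
      _ ≤ K * (C * i) := by gcongr; exact min_le_right j K
      _ = K * C * i := by ring
  let z : ℕ → Precone S s ω := fun j => ⟨fun i => c i (min j K), x.bounded_of_dist_le (hdist · j)⟩
  refine ⟨fun j => SeparationQuotient.mk (z j), ?_, ?_, fun j hj => ?_⟩
  · exact mk_eq_mk_of_eventuallyEq (Eventually.of_forall fun i => by simp [z, hc0])
  · exact mk_eq_mk_of_eventuallyEq (h.mono fun i hi => by simp [z, hcK i hi])
  · rw [SeparationQuotient.dist_mk]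
    refine dist_le_of_eventually_le hC (Eventually.of_forall fun i => ?_)
    simpa [z, min_eq_left hj.le, min_eq_left (Nat.succ_le_of_lt hj)] using hstep i j hj

theorem exists_chain_from_basepoint [ProperSpace S] {r : ℝ} (hr : 0 < r)
    (hconn : ∀ t : S, ∃ (k : ℕ) (c : ℕ → S), IsRPath r k s t c)
    {K : ℕ} (hK : ∀ i : ℝ, r ≤ i → nu s i (4 * i) ≤ K) (hω : Nonprincipal ω)
    (y : Precone S s ω) (hy : 0 < dist basepoint y) :
    ∃ c : ℕ → Cone S s ω, c 0 = SeparationQuotient.mk basepoint ∧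
      c K = SeparationQuotient.mk y ∧ ∀ j < K, dist (c j) (c (j + 1)) ≤ dist basepoint y / 2 := by
  set D := dist basepoint y
  refine exists_chain_of_eventually_isRPath _ _ (by positivity) K ?_
  have hnear : ∀ᶠ i : ℕ in (ω : Filter ℕ), dist s (y.seq i) ≤ 2 * D * i :=
    eventually_dist_le_of_dist_lt hω (by linarith : D < 2 * D)
  have hscale : ∀ᶠ i : ℕ in (ω : Filter ℕ), r ≤ D / 2 * i :=
    (hω.tendsto_natCast.const_mul_atTop (by positivity)).eventually_ge_atTop r
  filter_upwards [hnear, hscale] with i hnear hscale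
  obtain ⟨c, hc⟩ :=
    exists_isRPath_nu (n := 4 * (D / 2 * i)) hr hconn hscale (hnear.trans_eq (by ring))
  exact ⟨_, hc.extend (hr.le.trans hscale) (hK _ hscale)⟩

end Precone

/-- Lemma 4.9 of the paper. If `(S,s)` is asymptotically transitive,
proper, `r`-connected, and `ν_S(i, 4i) ≤ K` for all real `i ≥ r`, then any two points
`p, q` of any asymptotic cone (w.r.t. a non-principal ultrafilter) are joined by `K+1`
points with consecutive distances at most `d^ω(p,q)/2`. -/
theorem cone_chains_of_nu_bounded {S : Type*} [MetricSpace S] [ProperSpace S]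
    (s : S) (r : ℝ) (hr : 0 < r)
    (hconn : ∀ t : S, ∃ (k : ℕ) (c : ℕ → S), IsRPath r k s t c)
    (htrans : ∀ ω : Ultrafilter ℕ, Nonprincipal ω → ∀ p q : Cone S s ω,
      ∃ e : Cone S s ω ≃ᵢ Cone S s ω, e p = q)
    (K : ℕ) (hK : ∀ i : ℝ, r ≤ i → nu s i (4 * i) ≤ K) :
    ∀ ω : Ultrafilter ℕ, Nonprincipal ω → ∀ p q : Cone S s ω,
      ∃ c : ℕ → Cone S s ω, c 0 = p ∧ c K = q ∧
        ∀ j < K, dist (c j) (c (j + 1)) ≤ dist p q / 2 := by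
  intro ω hω p q
  obtain ⟨e, he⟩ := htrans ω hω (SeparationQuotient.mk Precone.basepoint) p
  obtain ⟨y, hy⟩ := SeparationQuotient.surjective_mk (e.symm q)
  have hdist : dist Precone.basepoint y = dist p q := by
    rw [← SeparationQuotient.dist_mk, hy, ← e.dist_eq, he, e.apply_symm_apply]
  rcases (dist_nonneg : 0 ≤ dist p q).eq_or_lt with hpq | hpq
  · exact ⟨fun _ => p, rfl, dist_eq_zero.1 hpq.symm, fun _ _ => by simp [← hpq]⟩
  obtain ⟨c, hc0, hcK, hc⟩ :=
    Precone.exists_chain_from_basepoint hr hconn hK hω y (hdist ▸ hpq)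
  refine ⟨fun j => e (c j), by simp [hc0, he], by simp [hcK, hy], fun j hj => ?_⟩
  simpa [e.dist_eq, hdist] using hc j hj
end

section
/- Let (S, s) be a pointed proper r-connected metric space with the property that in every asymptotic cone, any two points p, q can be connected by K+1 points p = p_0, ..., p_K = q with consecutive distances at most d(p,q)/2 (for some fixed K). Then every asymptotic cone of S (with respect to any non-principal ultrafilter) is path connected. -/
open Filter Topology

section aux
variable {S : Type*} [MetricSpace S]

noncomputable def iterChain (ch : S → S → ℕ → S) (K : ℕ) (p q : S) : ℕ → ℕ → S
  | 0, i => if i = 0 then p else q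
  | (n+1), i => ch (iterChain ch K p q n (i / K)) (iterChain ch K p q n (i / K + 1)) (i % K)

variable {ch : S → S → ℕ → S} {K : ℕ} (hK : 0 < K)
  (hch0 : ∀ a b : S, ch a b 0 = a) (hchK : ∀ a b : S, ch a b K = b)
  (hchd : ∀ a b : S, ∀ j < K, dist (ch a b j) (ch a b (j+1)) ≤ dist a b / 2)
  (p q : S)

include hK hch0

lemma iterChain_zero : ∀ n, iterChain ch K p q n 0 = p
  | 0 => by simp [iterChain]
  | (n+1) => by
      simp [iterChain, Nat.zero_div, Nat.zero_mod, hch0, iterChain_zero n]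

include hchK in
lemma iterChain_top : ∀ n, iterChain ch K p q n (K ^ n) = q
  | 0 => by simp [iterChain]
  | (n+1) => by
      have h1 : K ^ (n+1) / K = K ^ n := by
        rw [pow_succ]; exact Nat.mul_div_cancel _ hK
      have h2 : K ^ (n+1) % K = 0 := by
        rw [pow_succ]; exact Nat.mul_mod_left _ _
      simp [iterChain, h1, h2, hch0, iterChain_top n]

include hchK hchd in
lemma iterChain_succ_eq (n a r : ℕ) (hr : r < K) :
    iterChain ch K p q (n+1) (K * a + r + 1)
      = ch (iterChain ch K p q n a) (iterChain ch K p q n (a+1)) (r+1) := by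
  rcases eq_or_lt_of_le (Nat.succ_le_of_lt hr) with hrK | hrK
  · -- r + 1 = K
    have heq : K * a + r + 1 = K * (a+1) := by rw [Nat.mul_succ, ← hrK]; rfl
    rw [heq]
    show ch (iterChain ch K p q n (K * (a+1) / K)) _ (K * (a+1) % K) = _
    rw [Nat.mul_div_cancel_left _ hK, Nat.mul_mod_right, hch0,
      show r + 1 = K from hrK, hchK]
  · -- r + 1 < K
    have hd : (K * a + r + 1) / K = a := by
      rw [Nat.add_assoc, Nat.mul_add_div hK, Nat.div_eq_of_lt hrK, Nat.add_zero]
    have hm : (K * a + r + 1) % K = r + 1 := by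
      rw [Nat.add_assoc, Nat.mul_add_mod, Nat.mod_eq_of_lt hrK]
    show ch (iterChain ch K p q n ((K * a + r + 1) / K)) _ ((K * a + r + 1) % K) = _
    rw [hd, hm]

include hchK hchd in
lemma iterChain_step : ∀ n, ∀ i < K ^ n,
    dist (iterChain ch K p q n i) (iterChain ch K p q n (i+1)) ≤ dist p q / 2 ^ n
  | 0, i, hi => by
      rw [pow_zero, Nat.lt_one_iff] at hi
      subst hi
      simp [iterChain]
  | (n+1), i, hi => by
      set a := i / K with ha
      set r := i % K with hr
      have hiK : i = K * a + r := (Nat.div_add_mod i K).symm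
      have hrK : r < K := Nat.mod_lt _ hK
      have haK : a < K ^ n := by
        have : i < K ^ n * K := by rwa [← pow_succ]
        exact Nat.div_lt_of_lt_mul (by rwa [Nat.mul_comm] at this)
      have e1 : iterChain ch K p q (n+1) i
          = ch (iterChain ch K p q n a) (iterChain ch K p q n (a+1)) r := rfl
      have e2 := iterChain_succ_eq hK hch0 hchK hchd p q n a r hrK
      rw [← hiK] at e2
      rw [e1, e2]
      calc dist _ _ ≤ dist (iterChain ch K p q n a) (iterChain ch K p q n (a+1)) / 2 :=
            hchd _ _ r hrK
        _ ≤ (dist p q / 2 ^ n) / 2 := by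
            have := iterChain_step n a haK
            linarith
        _ = dist p q / 2 ^ (n+1) := by ring

include hchK hchd in
lemma iterChain_range (n : ℕ) : ∀ m i, i + m ≤ K ^ n →
    dist (iterChain ch K p q n i) (iterChain ch K p q n (i+m)) ≤ m * (dist p q / 2 ^ n)
  | 0, i, _ => by simp
  | (m+1), i, him => by
      have h1 := iterChain_range n m i (by omega)
      have h2 := iterChain_step hK hch0 hchK hchd p q n (i+m) (by omega)
      calc dist _ _ ≤ dist (iterChain ch K p q n i) (iterChain ch K p q n (i+m))
            + dist (iterChain ch K p q n (i+m)) (iterChain ch K p q n (i+m+1)) := by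
              rw [← Nat.add_assoc]; exact dist_triangle _ _ _
        _ ≤ m * (dist p q / 2 ^ n) + dist p q / 2 ^ n := by linarith
        _ = (m+1 : ℕ) * (dist p q / 2 ^ n) := by push_cast; ring

lemma iterChain_consist (n i : ℕ) :
    iterChain ch K p q (n+1) (K * i) = iterChain ch K p q n i := by
  show ch (iterChain ch K p q n (K * i / K)) _ (K * i % K) = _
  rw [Nat.mul_div_cancel_left _ hK, Nat.mul_mod_right, hch0]

end aux

/-- STATEMENT 12 (the general fact behind "2) ⇒ 3)" of Theorem 4.7, applied to
asymptotic cones, which are complete): a nonempty complete metric space in which,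
for some fixed `K ≥ 2`, any two points `p, q` can be joined by a chain of `K+1`
points with consecutive distances at most `d(p,q)/2`, is path connected. -/
theorem pathConnected_of_midpoint_chains {S : Type*} [MetricSpace S] [CompleteSpace S]
    [Nonempty S] (K : ℕ) (hK : 2 ≤ K)
    (h : ∀ p q : S, ∃ c : ℕ → S, c 0 = p ∧ c K = q ∧
      ∀ j < K, dist (c j) (c (j + 1)) ≤ dist p q / 2) :
    PathConnectedSpace S := by
  classical
  have hK0 : 0 < K := by omega
  have hKR : (0:ℝ) < K := by exact_mod_cast hK0
  set ch : S → S → ℕ → S := fun a b => (h a b).choose with hchdef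
  have hch0 : ∀ a b : S, ch a b 0 = a := fun a b => (h a b).choose_spec.1
  have hchK : ∀ a b : S, ch a b K = b := fun a b => (h a b).choose_spec.2.1
  have hchd : ∀ a b : S, ∀ j < K, dist (ch a b j) (ch a b (j+1)) ≤ dist a b / 2 :=
    fun a b => (h a b).choose_spec.2.2
  refine ⟨‹Nonempty S›, fun p q => ?_⟩
  set D : ℝ := dist p q with hD
  have hD0 : 0 ≤ D := dist_nonneg
  set f : ℕ → ℕ → S := iterChain ch K p q with hf
  set x : ℕ → unitInterval → S := fun n t => f n ⌊(t:ℝ) * K ^ n⌋₊ with hx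
  -- basic facts about floors
  have ht0 : ∀ (t : unitInterval) (n : ℕ), (0:ℝ) ≤ (t:ℝ) * K ^ n :=
    fun t n => mul_nonneg t.2.1 (by positivity)
  have hfloor_le : ∀ (t : unitInterval) (n : ℕ), ⌊(t:ℝ) * K ^ n⌋₊ ≤ K ^ n := by
    intro t n
    have : (t:ℝ) * K ^ n ≤ ((K ^ n : ℕ) : ℝ) := by
      push_cast
      nlinarith [t.2.2, pow_pos hKR n]
    calc ⌊(t:ℝ) * K ^ n⌋₊ ≤ ⌊((K ^ n : ℕ) : ℝ)⌋₊ := Nat.floor_mono this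
      _ = K ^ n := Nat.floor_natCast _
  -- geometric step bound between consecutive levels
  have hstep : ∀ (t : unitInterval) (n : ℕ),
      dist (x n t) (x (n+1) t) ≤ (K * D / 2) * (1/2) ^ n := by
    intro t n
    set m := ⌊(t:ℝ) * K ^ n⌋₊ with hm
    set m' := ⌊(t:ℝ) * K ^ (n+1)⌋₊ with hm'
    have h1 : K * m ≤ m' := by
      apply Nat.le_floor
      push_cast
      have hle : (m : ℝ) ≤ (t:ℝ) * K ^ n := Nat.floor_le (ht0 t n)
      calc (K:ℝ) * m ≤ K * ((t:ℝ) * K ^ n) := by nlinarith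
        _ = (t:ℝ) * K ^ (n+1) := by ring
    have h2 : m' < K * (m + 1) := by
      have hlt : (t:ℝ) * K ^ n < m + 1 := Nat.lt_floor_add_one _
      have : (t:ℝ) * K ^ (n+1) < ((K * (m+1) : ℕ) : ℝ) := by
        push_cast
        calc (t:ℝ) * K ^ (n+1) = K * ((t:ℝ) * K ^ n) := by ring
          _ < K * (m + 1) := by nlinarith
      exact Nat.floor_lt (ht0 t (n+1)) |>.2 this
    obtain ⟨s, hs⟩ : ∃ s, m' = K * m + s := ⟨m' - K * m, by omega⟩
    have hsK : s < K := by
      have hlt : K * m + s < K * m + K := by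
        calc K * m + s = m' := hs.symm
          _ < K * (m + 1) := h2
          _ = K * m + K := by ring
      exact Nat.lt_of_add_lt_add_left hlt
    have hrange := iterChain_range (ch := ch) hK0 hch0 hchK hchd p q (n+1) s (K * m)
      (by rw [← hs]; exact hfloor_le t (n+1))
    have hcons := iterChain_consist (ch := ch) (K := K) hK0 hch0 p q n m
    have hxn : x n t = f (n+1) (K * m) := by
      show f n m = _
      exact hcons.symm
    have hxn1 : x (n+1) t = f (n+1) (K * m + s) := by
      show f (n+1) m' = _
      rw [hs]
    rw [hxn, hxn1]
    calc dist (f (n+1) (K * m)) (f (n+1) (K * m + s)) ≤ s * (D / 2 ^ (n+1)) := hrange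
      _ ≤ (K:ℝ) * (D / 2 ^ (n+1)) := by
          have hsle : (s:ℝ) ≤ K := by exact_mod_cast hsK.le
          have hpos : (0:ℝ) ≤ D / 2 ^ (n+1) := by positivity
          exact mul_le_mul_of_nonneg_right hsle hpos
      _ = (K * D / 2) * (1/2) ^ n := by
          rw [one_div_pow, pow_succ]
          ring
  have hcauchy : ∀ t : unitInterval, CauchySeq (fun n => x n t) :=
    fun t => cauchySeq_of_le_geometric (1/2) (K * D / 2) (by norm_num) (hstep t)
  have hlimex : ∀ t : unitInterval, ∃ y, Tendsto (fun n => x n t) atTop (𝓝 y) :=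
    fun t => cauchySeq_tendsto_of_complete (hcauchy t)
  choose g hg using hlimex
  have hgd : ∀ (t : unitInterval) (n : ℕ), dist (x n t) (g t) ≤ K * D * (1/2) ^ n := by
    intro t n
    have := dist_le_of_le_geometric_of_tendsto (1/2) (K * D / 2) (by norm_num)
      (hstep t) (hg t) n
    calc dist (x n t) (g t) ≤ (K * D / 2) * (1/2) ^ n / (1 - 1/2) := this
      _ = K * D * (1/2) ^ n := by ring
  -- distance bound for nearby parameters
  have hclose : ∀ (n : ℕ) (t t' : unitInterval), |(t':ℝ) - (t:ℝ)| ≤ (1/K) ^ n →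
      dist (x n t) (x n t') ≤ D * (1/2) ^ n := by
    intro n t t' htt'
    -- wlog t ≤ t'
    have main : ∀ a b : unitInterval, (a:ℝ) ≤ (b:ℝ) → (b:ℝ) - (a:ℝ) ≤ (1/K) ^ n →
        dist (x n a) (x n b) ≤ D * (1/2) ^ n := by
      intro a b hab hba
      set m := ⌊(a:ℝ) * K ^ n⌋₊ with hm
      set m' := ⌊(b:ℝ) * K ^ n⌋₊ with hm'
      have h1 : m ≤ m' := Nat.floor_mono (by nlinarith [pow_pos hKR n])
      have h2 : m' ≤ m + 1 := by
        have hfl : (a:ℝ) * K ^ n < m + 1 := Nat.lt_floor_add_one _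
        have hKn : ((1:ℝ)/K) ^ n * K ^ n = 1 := by
          rw [← mul_pow, one_div_mul_cancel (ne_of_gt hKR), one_pow]
        have : (b:ℝ) * K ^ n < ((m + 2 : ℕ) : ℝ) := by
          push_cast
          nlinarith [pow_pos hKR n]
        have := (Nat.floor_lt (ht0 b n)).2 this
        omega
      obtain ⟨s, hs⟩ : ∃ s, m' = m + s := ⟨m' - m, by omega⟩
      have hs1 : s ≤ 1 := by omega
      have hrange := iterChain_range (ch := ch) hK0 hch0 hchK hchd p q n s m
        (by rw [← hs]; exact hfloor_le b n)
      have : dist (x n a) (x n b) ≤ s * (D / 2 ^ n) := by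
        show dist (f n m) (f n m') ≤ _
        rw [hs]
        exact hrange
      calc dist (x n a) (x n b) ≤ s * (D / 2 ^ n) := this
        _ ≤ 1 * (D / 2 ^ n) := by
            have hs1' : (s:ℝ) ≤ 1 := by exact_mod_cast hs1
            have : (0:ℝ) ≤ D / 2 ^ n := by positivity
            nlinarith
        _ = D * (1/2) ^ n := by rw [one_div_pow]; ring
    rcases le_total (t:ℝ) (t':ℝ) with hle | hle
    · exact main t t' hle (by rw [abs_of_nonneg (by linarith)] at htt'; exact htt')
    · rw [dist_comm]
      exact main t' t hle (by rw [abs_sub_comm, abs_of_nonneg (by linarith)] at htt'; exact htt')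
  -- continuity
  have hgcont : Continuous g := by
    rw [Metric.continuous_iff]
    intro t ε hε
    obtain ⟨n, hn⟩ : ∃ n : ℕ, (2 * K * D + D) * (1/2) ^ n < ε := by
      have hp : Tendsto (fun n : ℕ => (1/2:ℝ) ^ n) atTop (𝓝 0) :=
        tendsto_pow_atTop_nhds_zero_of_lt_one (by norm_num) (by norm_num)
      have h0 : Tendsto (fun n : ℕ => (2 * K * D + D) * (1/2:ℝ) ^ n) atTop (𝓝 0) := by
        simpa using hp.const_mul (2 * (K:ℝ) * D + D)
      exact ((h0.eventually (eventually_lt_nhds hε)).exists)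
    refine ⟨(1/K) ^ n, by positivity, fun t' ht' => ?_⟩
    have hxt : |(t':ℝ) - (t:ℝ)| ≤ (1/K) ^ n := by
      have : dist t' t = |(t':ℝ) - (t:ℝ)| := rfl
      linarith [this ▸ ht'.le]
    calc dist (g t') (g t)
        ≤ dist (g t') (x n t') + dist (x n t') (x n t) + dist (x n t) (g t) :=
          dist_triangle4 _ _ _ _
      _ ≤ K * D * (1/2) ^ n + D * (1/2) ^ n + K * D * (1/2) ^ n := by
          have h1 := hgd t' n
          have h2 := hclose n t' t (by rwa [abs_sub_comm])
          have h3 := hgd t n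
          rw [dist_comm (g t')] at *
          linarith
      _ = (2 * K * D + D) * (1/2) ^ n := by ring
      _ < ε := hn
  -- endpoints
  have hg0 : g 0 = p := by
    have hx0 : ∀ n, x n 0 = p := by
      intro n
      show f n ⌊((0 : unitInterval) : ℝ) * K ^ n⌋₊ = p
      have h0 : ((0 : unitInterval) : ℝ) * K ^ n = 0 := by norm_num
      rw [h0, Nat.floor_zero]
      exact iterChain_zero (ch := ch) (K := K) hK0 hch0 p q n
    have := hg 0
    rw [show (fun n => x n 0) = fun _ => p from funext hx0] at this
    exact tendsto_nhds_unique this tendsto_const_nhds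
  have hg1 : g 1 = q := by
    have hx1 : ∀ n, x n 1 = q := by
      intro n
      show f n ⌊((1 : unitInterval) : ℝ) * K ^ n⌋₊ = q
      have h1 : ((1 : unitInterval) : ℝ) * K ^ n = ((K ^ n : ℕ) : ℝ) := by push_cast; ring
      rw [h1, Nat.floor_natCast]
      exact iterChain_top (ch := ch) (K := K) hK0 hch0 hchK p q n
    have := hg 1
    rw [show (fun n => x n 1) = fun _ => q from funext hx1] at this
    exact tendsto_nhds_unique this tendsto_const_nhds
  exact ⟨⟨⟨g, hgcont⟩, hg0, hg1⟩⟩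
end

section
/- Let (S, s) be an asymptotically transitive proper r-connected pointed metric space such that Cone^ω(S) is connected for all non-principal ultrafilters ω. Then ν_S(m, n) is bounded by a homogeneous function: there exists f : ℝ^{≥0} → ℝ^{≥0} with ν_S(m, n) ≤ f(n/m) for all m ≥ r, n ≥ 0. Equivalently (contrapositive): if there exists c > 0 such that ν_S(n, cn) is unbounded in n, then some asymptotic cone of S is disconnected. -/
open Filter

section Aux

variable {S : Type*} [MetricSpace S] {s : S} {r : ℝ}

lemma pathLen_chain (hconn : ∀ t : S, ∃ (k : ℕ) (c : ℕ → S), IsRPath r k s t c) (t : S) :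
    ∃ c : ℕ → S, IsRPath r (pathLen s r t) s t c := by
  obtain ⟨k, c, hc⟩ := hconn t
  exact Nat.sInf_mem (⟨k, c, hc⟩ : {k : ℕ | ∃ c : ℕ → S, IsRPath r k s t c}.Nonempty)

lemma pathLen_mono (hconn : ∀ t : S, ∃ (k : ℕ) (c : ℕ → S), IsRPath r k s t c)
    {m : ℝ} (hm : r ≤ m) (t : S) : pathLen s m t ≤ pathLen s r t := by
  obtain ⟨c, h0, hk, hs⟩ := pathLen_chain hconn t
  exact Nat.sInf_le ⟨c, h0, hk, fun i hi => (hs i hi).trans hm⟩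

lemma pathLen_step (hconn : ∀ t : S, ∃ (k : ℕ) (c : ℕ → S), IsRPath r k s t c)
    (t u : S) (hd : dist u t ≤ r) : pathLen s r t ≤ pathLen s r u + 1 := by
  obtain ⟨c, h0, hk, hs⟩ := pathLen_chain hconn u
  set k := pathLen s r u with hku
  refine Nat.sInf_le ⟨fun i => if i ≤ k then c i else t, ?_, ?_, ?_⟩
  · simpa using h0
  · simp
  · intro i hi
    dsimp only
    rcases lt_or_ge i k with h | h
    · rw [if_pos h.le, if_pos (by omega)]
      exact hs i h
    · have hik : i = k := by omega
      subst hik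
      rw [if_pos le_rfl, if_neg (by omega), hk]
      exact hd

/-- Chains in connected pseudometric spaces (with gap `< 1`). -/
lemma exists_chain_of_connected {X : Type*} [PseudoMetricSpace X] [ConnectedSpace X]
    (p x : X) :
    ∃ (K : ℕ) (w : ℕ → X), w 0 = p ∧ w K = x ∧ ∀ l < K, dist (w l) (w (l + 1)) < 1 := by
  set U : Set X :=
    {z | ∃ (K : ℕ) (w : ℕ → X), w 0 = p ∧ w K = z ∧ ∀ l < K, dist (w l) (w (l + 1)) < 1}
    with hU
  have hp : p ∈ U := ⟨0, fun _ => p, rfl, rfl, fun l hl => absurd hl (Nat.not_lt_zero l)⟩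
  have hext : ∀ z z' : X, z ∈ U → dist z z' < 1 → z' ∈ U := by
    rintro z z' ⟨K, w, h0, hK, hs⟩ hd
    refine ⟨K + 1, fun l => if l ≤ K then w l else z', ?_, ?_, ?_⟩
    · dsimp only; rw [if_pos (Nat.zero_le K)]; exact h0
    · dsimp only; rw [if_neg (by omega)]
    · intro l hl
      dsimp only
      rcases lt_or_ge l K with h | h
      · rw [if_pos h.le, if_pos (by omega)]
        exact hs l h
      · have hlK : l = K := by omega
        subst hlK
        rw [if_pos le_rfl, if_neg (by omega), hK]
        exact hd
  have hopen : IsOpen U := by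
    rw [Metric.isOpen_iff]
    intro z hz
    exact ⟨1, one_pos, fun z' hz' =>
      hext z z' hz (by rw [dist_comm]; exact Metric.mem_ball.1 hz')⟩
  have hclosed : IsClosed U := by
    rw [← isOpen_compl_iff, Metric.isOpen_iff]
    intro z hz
    refine ⟨1, one_pos, fun z' hz' hz'U => hz (hext z' z hz'U (Metric.mem_ball.1 hz'))⟩
  have huniv : U = Set.univ := IsClopen.eq_univ ⟨hclosed, hopen⟩ ⟨p, hp⟩
  have hx : x ∈ U := huniv ▸ Set.mem_univ x
  exact hx

end Aux

/-- if `(S,s)` is an asymptotically transitive proper `r`-connected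
pointed metric space all of whose asymptotic cones (w.r.t. non-principal ultrafilters)
are connected, then `ν_S` is bounded by a homogeneous function:
`ν_S(m,n) ≤ f(n/m)` for all `m ≥ r`, `n ≥ 0`. -/
theorem nu_homogeneous_of_cones_connected {S : Type*} [MetricSpace S] [ProperSpace S]
    (s : S) (r : ℝ) (hr : 0 < r)
    (hconn : ∀ t : S, ∃ (k : ℕ) (c : ℕ → S), IsRPath r k s t c)
    (htrans : ∀ ω : Ultrafilter ℕ, Nonprincipal ω → ∀ p q : Cone S s ω,
      ∃ e : Cone S s ω ≃ᵢ Cone S s ω, e p = q)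
    (hcones : ∀ ω : Ultrafilter ℕ, Nonprincipal ω → ConnectedSpace (Cone S s ω)) :
    ∃ f : ℝ → ℝ, ∀ m n : ℝ, r ≤ m → 0 ≤ n → (nu s m n : ℝ) ≤ f (n / m) := by
    classical
  -- uniform bound for `pathLen s r` on closed balls, by properness
  have ballB : ∀ R : ℝ, ∃ C : ℕ, ∀ t : S, dist s t ≤ R → pathLen s r t ≤ C := by
    intro R
    obtain ⟨F, hF⟩ := (isCompact_closedBall s R).elim_finite_subcover
      (fun t : S => Metric.ball t r) (fun t => Metric.isOpen_ball)
      (fun t _ => Set.mem_iUnion.2 ⟨t, Metric.mem_ball_self hr⟩)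
    refine ⟨F.sup (fun u => pathLen s r u) + 1, fun t ht => ?_⟩
    have htK : t ∈ ⋃ u ∈ F, Metric.ball u r :=
      hF (Metric.mem_closedBall.2 (by rwa [dist_comm]))
    obtain ⟨u, huF, hu⟩ := Set.mem_iUnion₂.1 htK
    have hut : dist u t ≤ r := by
      rw [dist_comm]; exact (Metric.mem_ball.1 hu).le
    calc pathLen s r t ≤ pathLen s r u + 1 := pathLen_step hconn t u hut
      _ ≤ F.sup (fun u => pathLen s r u) + 1 :=
        Nat.add_le_add_right (Finset.le_sup huF) 1
  have hnu_le : ∀ (m R : ℝ) (C : ℕ), r ≤ m → (∀ t : S, dist s t ≤ R → pathLen s r t ≤ C) →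
      nu s m R ≤ C := by
    intro m R C hm hC
    refine csSup_le' ?_
    rintro k ⟨t, ht, rfl⟩
    exact le_trans (pathLen_mono hconn hm t) (hC t ht)
  -- the key uniform bound along rays
  have key : ∀ q : ℝ, 0 ≤ q → ∃ N : ℕ, ∀ m : ℝ, r ≤ m → nu s m (q * m) ≤ N := by
    intro q hq
    by_contra hbad
    push_neg at hbad
    -- escalation: bad `m`'s are unbounded
    have H' : ∀ N : ℕ, ∃ m : ℝ, r ≤ m ∧ (N : ℝ) < m ∧ N < nu s m (q * m) := by
      intro N
      obtain ⟨C, hC⟩ := ballB (q * N)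
      obtain ⟨m, hm, hnu⟩ := hbad (max N C)
      refine ⟨m, hm, ?_, lt_of_le_of_lt (le_max_left _ _) hnu⟩
      by_contra hle
      push_neg at hle
      have hbound : nu s m (q * m) ≤ C := by
        refine hnu_le m (q * m) C hm (fun t ht => hC t (ht.trans ?_))
        exact mul_le_mul_of_nonneg_left hle hq
      exact absurd hbound (not_le.2 (lt_of_le_of_lt (le_max_right N C) hnu))
    choose Fm hFr hFgt hFnu using H'
    set M : ℕ → ℝ := fun j =>
      Nat.rec (Fm 1) (fun j prev => Fm (max (⌊prev⌋₊ + 1) (j + 2))) j with hM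
    have hMs : ∀ j, M (j + 1) = Fm (max (⌊M j⌋₊ + 1) (j + 2)) := fun j => rfl
    have hMr : ∀ j, r ≤ M j := by
      intro j
      cases j with
      | zero => exact hFr 1
      | succ j => rw [hMs j]; exact hFr _
    have hM0 : ∀ j, 0 ≤ M j := fun j => le_trans hr.le (hMr j)
    set nseq : ℕ → ℕ := fun j => ⌊M j⌋₊ with hnseqdef
    have hnseq1 : ∀ j, j + 1 ≤ nseq j := by
      intro j
      cases j with
      | zero =>
        have h1 : ((1 : ℕ) : ℝ) < M 0 := hFgt 1
        show (1 : ℕ) ≤ ⌊M 0⌋₊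
        exact Nat.le_floor h1.le
      | succ j =>
        have h1 : ((max (⌊M j⌋₊ + 1) (j + 2) : ℕ) : ℝ) < M (j + 1) := by
          rw [hMs j]; exact hFgt _
        have h2 : (max (⌊M j⌋₊ + 1) (j + 2) : ℕ) ≤ nseq (j + 1) := Nat.le_floor h1.le
        omega
    have hmono : StrictMono nseq := by
      refine strictMono_nat_of_lt_succ (fun j => ?_)
      have h1 : ((max (⌊M j⌋₊ + 1) (j + 2) : ℕ) : ℝ) < M (j + 1) := by
        rw [hMs j]; exact hFgt _
      have h2 : (max (⌊M j⌋₊ + 1) (j + 2) : ℕ) ≤ nseq (j + 1) := Nat.le_floor h1.le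
      have h3 : nseq j + 1 ≤ max (⌊M j⌋₊ + 1) (j + 2) := le_max_left _ _
      omega
    have hnu_gt : ∀ j, j < nu s (M j) (q * M j) := by
      intro j
      cases j with
      | zero => exact lt_trans Nat.zero_lt_one (hFnu 1)
      | succ j =>
        have := hFnu (max (⌊M j⌋₊ + 1) (j + 2))
        rw [← hMs j] at this
        have h3 : j + 1 < max (⌊M j⌋₊ + 1) (j + 2) + 1 := by
          have := le_max_right (⌊M j⌋₊ + 1) (j + 2); omega
        omega
    -- witnesses realizing the sup
    have hwit : ∀ j, ∃ t : S, dist s t ≤ q * M j ∧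
        pathLen s (M j) t = nu s (M j) (q * M j) := by
      intro j
      have hqm : 0 ≤ q * M j := mul_nonneg hq (hM0 j)
      have hne : (pathLen s (M j) '' {t : S | dist s t ≤ q * M j}).Nonempty :=
        ⟨pathLen s (M j) s, ⟨s, by simpa using hqm, rfl⟩⟩
      obtain ⟨C, hC⟩ := ballB (q * M j)
      have hbdd : BddAbove (pathLen s (M j) '' {t : S | dist s t ≤ q * M j}) := by
        refine ⟨C, ?_⟩
        rintro k ⟨t, ht, rfl⟩
        exact le_trans (pathLen_mono hconn (hMr j) t) (hC t ht)
      have hmem := Nat.sSup_mem hne hbdd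
      obtain ⟨t, ht, hteq⟩ := hmem
      exact ⟨t, ht, hteq⟩
    choose T hT1 hT2 using hwit
    have hTgt : ∀ j, j < pathLen s (M j) (T j) := fun j => by
      rw [hT2 j]; exact hnu_gt j
    -- the ultrafilter
    have hAinf : (Set.range nseq).Infinite :=
      Set.infinite_range_of_injective hmono.injective
    have hneb : Filter.NeBot (Filter.cofinite ⊓ Filter.principal (Set.range nseq)) := by
      rw [Filter.inf_principal_neBot_iff]
      intro U hU
      have h1 : (Set.range nseq \ Uᶜ).Infinite := hAinf.diff hU
      obtain ⟨a, ha⟩ := h1.nonempty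
      exact ⟨a, not_not.1 ha.2, ha.1⟩
    letI ω : Ultrafilter ℕ :=
      @Ultrafilter.of ℕ (Filter.cofinite ⊓ Filter.principal (Set.range nseq)) hneb
    have hωle : (ω : Filter ℕ) ≤ Filter.cofinite ⊓ Filter.principal (Set.range nseq) :=
      Ultrafilter.of_le _
    have hnp : Nonprincipal ω := hωle.trans inf_le_left
    have hA : Set.range nseq ∈ ω :=
      Filter.le_principal_iff.1 (hωle.trans inf_le_right)
    -- cone points
    let y : Precone S s ω := ⟨fun _ => s, 0, fun i _ => by simp⟩
    have hxB : ∃ B : ℝ, ∀ i : ℕ, 1 ≤ i → dist s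
        (if i ∈ Set.range nseq then T (Function.invFun nseq i) else s) ≤ B * i := by
      refine ⟨2 * q, fun i hi => ?_⟩
      have hi1 : (1 : ℝ) ≤ i := by exact_mod_cast hi
      split_ifs with h
      · have hinv : nseq (Function.invFun nseq i) = i := Function.invFun_eq h
        set j := Function.invFun nseq i with hjdef
        calc dist s (T j) ≤ q * M j := hT1 j
          _ ≤ q * ((nseq j : ℝ) + 1) :=
              mul_le_mul_of_nonneg_left (Nat.lt_floor_add_one (M j)).le hq
          _ = q * ((i : ℝ) + 1) := by rw [hinv]
          _ ≤ 2 * q * i := by nlinarith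
      · simp only [dist_self]
        positivity
    let x : Precone S s ω :=
      ⟨fun i => if i ∈ Set.range nseq then T (Function.invFun nseq i) else s, hxB⟩
    -- chain in the cone
    haveI := hcones ω hnp
    obtain ⟨K, w, hw0, hwK, hws⟩ :=
      exists_chain_of_connected (SeparationQuotient.mk y) (SeparationQuotient.mk x)
    let W : ℕ → Precone S s ω := fun l => Function.surjInv SeparationQuotient.surjective_mk (w l)
    have hWmk : ∀ l, SeparationQuotient.mk (W l) = w l := fun l =>
      Function.surjInv_eq SeparationQuotient.surjective_mk (w l)
    have hdistW : ∀ l, l < K → dist (W l) (W (l + 1)) < 1 := by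
      intro l hl
      have h := hws l hl
      rwa [← hWmk l, ← hWmk (l + 1), SeparationQuotient.dist_mk] at h
    have hdy : dist y (W 0) < 1 := by
      have h : dist y (W 0) = dist (SeparationQuotient.mk y) (SeparationQuotient.mk (W 0)) :=
        (SeparationQuotient.dist_mk _ _).symm
      rw [h, hWmk 0, hw0, dist_self]
      exact one_pos
    have hdx : dist (W K) x < 1 := by
      have h : dist (W K) x = dist (SeparationQuotient.mk (W K)) (SeparationQuotient.mk x) :=
        (SeparationQuotient.dist_mk _ _).symm
      rw [h, hWmk K, hwK, dist_self]
      exact one_pos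
    -- eventual smallness of scaled distances
    have hev : ∀ a b : Precone S s ω, dist a b < 1 →
        {i : ℕ | dist (a.seq i) (b.seq i) / i < 1} ∈ ω := by
      intro a b hab
      have ht := Precone.tendsto_pdist a b
      have hlt : limUnder (ω : Filter ℕ) (fun i => dist (a.seq i) (b.seq i) / i) < 1 := hab
      exact ht.eventually_lt_const hlt
    have hG0 : {i : ℕ | dist (y.seq i) ((W 0).seq i) / i < 1} ∈ ω := hev y (W 0) hdy
    have hGK : {i : ℕ | dist ((W K).seq i) (x.seq i) / i < 1} ∈ ω := hev (W K) x hdx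
    have hGmid : {i : ℕ | ∀ l < K, dist ((W l).seq i) ((W (l + 1)).seq i) / i < 1} ∈ ω := by
      have hmem : (⋂ l ∈ Finset.range K,
          {i : ℕ | dist ((W l).seq i) ((W (l + 1)).seq i) / i < 1}) ∈ ω :=
        (Filter.biInter_finset_mem _).2
          (fun l hl => hev (W l) (W (l + 1)) (hdistW l (Finset.mem_range.1 hl)))
      refine Filter.mem_of_superset hmem ?_
      intro i hi l hl
      exact Set.mem_iInter₂.1 hi l (Finset.mem_range.2 hl)
    have hGF : (nseq '' {j : ℕ | j ≤ K + 2})ᶜ ∈ ω := by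
      apply hnp
      rw [Filter.mem_cofinite, compl_compl]
      exact ((Set.finite_Iic (K + 2)).image nseq)
    have hGall := Filter.inter_mem (Filter.inter_mem (Filter.inter_mem
      (Filter.inter_mem hA hGF) hG0) hGK) hGmid
    obtain ⟨i, ⟨⟨⟨hiA, hiF⟩, hi0⟩, hiK⟩, himid⟩ := Filter.nonempty_of_mem hGall
    set j := Function.invFun nseq i with hjdef
    have hji : nseq j = i := Function.invFun_eq hiA
    have hjK : K + 3 ≤ j := by
      by_contra h
      push_neg at h
      exact hiF ⟨j, show j ≤ K + 2 by omega, hji⟩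
    have hi1 : 1 ≤ i := by
      rw [← hji]
      have := hnseq1 j
      omega
    have hipos : (0 : ℝ) < (i : ℝ) := by exact_mod_cast hi1
    have hiM : (i : ℝ) ≤ M j := by
      rw [← hji]
      exact Nat.floor_le (hM0 j)
    have hstep : ∀ a b : S, dist a b / i < 1 → dist a b ≤ M j := fun a b h =>
      le_trans (le_of_lt ((div_lt_one hipos).1 h)) hiM
    -- the lifted chain in S
    set c : ℕ → S := fun l =>
      if l = 0 then s else if l ≤ K + 1 then (W (l - 1)).seq i else T j with hcdef
    have hc0 : c 0 = s := if_pos rfl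
    have hcend : c (K + 2) = T j := by
      simp only [hcdef]
      rw [if_neg (by omega), if_neg (by omega)]
    have hchain : IsRPath (M j) (K + 2) s (T j) c := by
      refine ⟨hc0, hcend, ?_⟩
      intro l hl
      rcases Nat.eq_zero_or_pos l with rfl | hlpos
      · have h1 : c 1 = (W 0).seq i := by
          simp only [hcdef]
          rw [if_neg (by omega), if_pos (by omega)]
        rw [hc0, h1]
        exact hstep _ _ hi0
      · rcases lt_or_ge l (K + 1) with h | h
        · have hcl : c l = (W (l - 1)).seq i := by
            simp only [hcdef]
            rw [if_neg (by omega), if_pos (by omega)]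
          have hcl1 : c (l + 1) = (W l).seq i := by
            simp only [hcdef]
            rw [if_neg (by omega), if_pos (by omega)]
            simp only [Nat.add_sub_cancel]
          rw [hcl, hcl1]
          have hmid := himid (l - 1) (by omega)
          have hll : l - 1 + 1 = l := by omega
          rw [hll] at hmid
          exact hstep _ _ hmid
        · have hlK : l = K + 1 := by omega
          subst hlK
          have hcl : c (K + 1) = (W K).seq i := by
            simp only [hcdef]
            rw [if_neg (by omega), if_pos le_rfl]
            simp only [Nat.add_sub_cancel]
          rw [hcl, hcend]
          have hx : x.seq i = T j := by
            show (if i ∈ Set.range nseq then T (Function.invFun nseq i) else s) = T j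
            rw [if_pos hiA]
          rw [← hx]
          exact hstep _ _ hiK
    have hle2 : pathLen s (M j) (T j) ≤ K + 2 := Nat.sInf_le ⟨c, hchain⟩
    have hgt := hTgt j
    omega
  -- define `f` and conclude
  have key' : ∀ q : ℝ, ∃ N : ℕ, 0 ≤ q → ∀ m : ℝ, r ≤ m → nu s m (q * m) ≤ N := by
    intro q
    by_cases h : 0 ≤ q
    · obtain ⟨N, hN⟩ := key q h
      exact ⟨N, fun _ => hN⟩
    · exact ⟨0, fun h' => absurd h' h⟩
  choose Nf hNf using key'
  refine ⟨fun q => (Nf q : ℝ), fun m n hm hn => ?_⟩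
  have hm0 : (0 : ℝ) < m := lt_of_lt_of_le hr hm
  have hq : 0 ≤ n / m := div_nonneg hn hm0.le
  have hrw : nu s m n = nu s m ((n / m) * m) := by rw [div_mul_cancel₀ _ hm0.ne']
  rw [hrw]
  show ((nu s m (n / m * m) : ℕ) : ℝ) ≤ (Nf (n / m) : ℝ)
  exact_mod_cast hNf (n / m) hq m hm
end

section
/- Let S be a path connected metric space containing a proper closed strongly convex subspace T with at least two points. Then S contains a cut point; specifically, if s ∈ S \ T, t ∈ T, and p : [0, ℓ] → S is a simple (injective) path from s to t, then p(t₁), where t₁ = min{a ∈ [0, ℓ] : p(a) ∈ T}, is a cut point of S. -/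
/-!
Strong convexity only speaks about simple paths, so the heart of the matter is that a path `γ`
between distinct points of a metric space contains a simple one. Call a closed `K ⊆ [0,1]`
through `0` and `1` a shortcut set if `γ` agrees at the two ends of each gap of `K`. By Zorn there
is a minimal one, and by minimality two points of `K` with the same image have no point of `K`
between them. Following `γ` along `K` and jumping across its gaps gives a path `C` whose fibres
are intervals; summing the diameters of `C '' [e k, u]` with weights `2⁻ᵏ` over a dense sequence
`e` gives a monotone reparametrisation collapsing exactly these fibres, through which `C` descends
to an injective path.

For the theorem, let `c = p t₁` and `v ∈ T \ {c}`. If a path `q` from `s` to `v` avoided `c`, the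
initial segment of `p` run backwards from `c`, followed by `q`, would contain a simple path from
`c` to `v`. That path lies in `T`, so after its start it avoids the initial segment and runs
inside `q`; hence `c` lies in the closure of the range of `q`, which is closed.
-/

/-- A subspace `T` of a metric space `S` is strongly convex if every simple
(injective) path in `S` starting and ending in `T` is entirely contained in `T`. -/
def StronglyConvex {S : Type*} [MetricSpace S] (T : Set S) : Prop :=
  ∀ (u v : S) (q : Path u v), Function.Injective ⇑q → u ∈ T → v ∈ T → ∀ a, q a ∈ T

/-- `c` is a cut point of `S`: two points of `S \ {c}` cannot be joined by a path
avoiding `c`. -/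
def IsCutPoint {S : Type*} [MetricSpace S] (c : S) : Prop :=
  ∃ u v : S, u ≠ c ∧ v ≠ c ∧ ¬ ∃ q : Path u v, ∀ a, q a ≠ c

open Set Metric Topology unitInterval

section FloorIn

variable {α : Type*} [CompleteLinearOrder α]

noncomputable def floorIn (K : Set α) (u : α) : α := sSup (K ∩ Iic u)

variable {K : Set α}

theorem floorIn_mem [TopologicalSpace α] [OrderTopology α] (hK : IsClosed K) (h0 : ⊥ ∈ K)
    (u : α) : floorIn K u ∈ K ∩ Iic u :=
  IsClosed.sSup_mem ⟨⊥, h0, bot_le⟩ (hK.inter isClosed_Iic)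

theorem le_floorIn {k u : α} (hk : k ∈ K) (hku : k ≤ u) : k ≤ floorIn K u := le_sSup ⟨hk, hku⟩

theorem floorIn_mono : Monotone (floorIn K) := fun _ _ h =>
  sSup_le_sSup (inter_subset_inter_right _ (Iic_subset_Iic.2 h))

theorem floorIn_eq_self {k : α} (hk : k ∈ K) : floorIn K k = k :=
  le_antisymm (sSup_le fun _ h => h.2) (le_floorIn hk le_rfl)

theorem IsClosed.exists_gap_of_disjoint_Icc [TopologicalSpace α] [OrderTopology α]
    (hK : IsClosed K) {a b a' b' : α} (ha : a ∈ K) (hb : b ∈ K) (haa' : a ≤ a') (hb'b : b' ≤ b)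
    (hdisj : Disjoint (Icc a' b') K) :
    ∃ x ∈ K ∩ Icc a a', ∃ y ∈ K ∩ Icc b' b, Disjoint (Ioo x y) K := by
  have hx : sSup (K ∩ Icc a a') ∈ K ∩ Icc a a' :=
    IsClosed.sSup_mem (s := K ∩ Icc a a') ⟨a, ha, le_rfl, haa'⟩ (hK.inter isClosed_Icc)
  have hy : sInf (K ∩ Icc b' b) ∈ K ∩ Icc b' b :=
    IsClosed.sInf_mem (s := K ∩ Icc b' b) ⟨b, hb, hb'b, le_rfl⟩ (hK.inter isClosed_Icc)
  refine ⟨_, hx, _, hy, disjoint_left.2 fun k ⟨hxk, hky⟩ hk => ?_⟩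
  rcases le_or_gt k a' with hka' | ha'k
  · exact hxk.not_ge (le_sSup ⟨hk, hx.2.1.trans hxk.le, hka'⟩)
  rcases le_or_gt b' k with hb'k | hkb'
  · exact hky.not_ge (sInf_le ⟨hk, hb'k, hky.le.trans hy.2.2⟩)
  · exact disjoint_left.1 hdisj ⟨ha'k.le, hkb'.le⟩ hk

end FloorIn

section Shortcut

variable {X : Type*} {γ : I → X}

def IsShortcut (γ : I → X) (K : Set I) : Prop :=
  IsClosed K ∧ 0 ∈ K ∧ 1 ∈ K ∧ ∀ a ∈ K, ∀ b ∈ K, a ≤ b → Disjoint (Ioo a b) K → γ a = γ b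

theorem isShortcut_univ : IsShortcut γ univ := by
  refine ⟨isClosed_univ, mem_univ _, mem_univ _, fun a _ b _ hab h => ?_⟩
  rcases hab.eq_or_lt with rfl | hab
  · rfl
  · exact absurd (disjoint_univ.1 h) (nonempty_Ioo.2 hab).ne_empty

theorem IsShortcut.sInter [TopologicalSpace X] [T2Space X] (hγ : Continuous γ)
    {c : Set (Set I)} (hc : ∀ K ∈ c, IsShortcut γ K) (hchain : IsChain (· ⊆ ·) c)
    (hne : c.Nonempty) : IsShortcut γ (⋂₀ c) := by
  refine ⟨isClosed_sInter fun K hK => (hc K hK).1, mem_sInter.2 fun K hK => (hc K hK).2.1,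
    mem_sInter.2 fun K hK => (hc K hK).2.2.1, fun a ha b hb hab hgap => ?_⟩
  rcases hab.eq_or_lt with rfl | hab
  · rfl
  -- `(a, b)` is a limit of pairs of gap ends of members of the chain
  have hclosed : IsClosed {p : I × I | γ p.1 = γ p.2} :=
    isClosed_eq (hγ.comp continuous_fst) (hγ.comp continuous_snd)
  refine hclosed.closure_subset (show (a, b) ∈ closure _ from
    mem_closure_iff_nhds.2 fun U hU => ?_)
  obtain ⟨Ua, hUa, Ub, hUb, hU⟩ := mem_nhds_prod_iff.1 hU
  obtain ⟨m, ham, hmb⟩ := exists_between hab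
  obtain ⟨u, ⟨hau, hum⟩, huU⟩ := exists_Ico_subset_of_mem_nhds' hUa ham
  obtain ⟨l, ⟨hml, hlb⟩, hlU⟩ := exists_Ioc_subset_of_mem_nhds' hUb hmb
  obtain ⟨a', haa', ha'u⟩ := exists_between hau
  obtain ⟨b', hlb', hb'b⟩ := exists_between hlb
  have ha'b' : a' ≤ b' := ha'u.le.trans (hum.trans (hml.trans hlb'.le))
  obtain ⟨K, hK, hdisj⟩ : ∃ K ∈ c, Disjoint (Icc a' b') K := by
    have : Nonempty c := hne.to_subtype
    obtain ⟨⟨K, hK⟩, hKe⟩ := isCompact_Icc.elim_directed_family_closed (fun K : c => K.1)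
      (fun K => (hc K.1 K.2).1)
      (by
        rw [← sInter_eq_iInter]
        exact disjoint_iff_inter_eq_empty.1 (hgap.mono_left (Icc_subset_Ioo haa' hb'b)))
      fun K L => (hchain.total K.2 L.2).elim (fun h => ⟨K, subset_rfl, h⟩)
        (fun h => ⟨L, h, subset_rfl⟩)
    exact ⟨K, hK, disjoint_iff_inter_eq_empty.2 hKe⟩
  obtain ⟨x, ⟨hxK, hx⟩, y, ⟨hyK, hy⟩, hxy⟩ := (hc K hK).1.exists_gap_of_disjoint_Icc
    (mem_sInter.1 ha K hK) (mem_sInter.1 hb K hK) haa'.le hb'b.le hdisj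
  refine ⟨(x, y), hU ⟨huU ⟨hx.1, hx.2.trans_lt ha'u⟩, hlU ⟨hlb'.trans_le hy.1, hy.2⟩⟩, ?_⟩
  exact (hc K hK).2.2.2 x hxK y hyK (hx.2.trans (ha'b'.trans hy.1)) hxy

theorem exists_minimal_isShortcut [TopologicalSpace X] [T2Space X] (hγ : Continuous γ) :
    ∃ K, Minimal (IsShortcut γ) K := by
  obtain ⟨K, -, hK⟩ := zorn_superset_nonempty {K | IsShortcut γ K}
    (fun c hc hchain hne => ⟨⋂₀ c, IsShortcut.sInter hγ hc hchain hne,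
      fun _ => sInter_subset_of_mem⟩) univ isShortcut_univ
  exact ⟨K, hK⟩

/-- Otherwise `K \ Ioo a b` would be a smaller shortcut set. -/
theorem Minimal.disjoint_Ioo_of_isShortcut {K : Set I} (hK : Minimal (IsShortcut γ) K)
    {a b : I} (ha : a ∈ K) (hb : b ∈ K) (heq : γ a = γ b) : Disjoint (Ioo a b) K := by
  obtain ⟨hcl, h0, h1, hgap⟩ := hK.prop
  have hK' : IsShortcut γ (K \ Ioo a b) := by
    refine ⟨hcl.sdiff isOpen_Ioo, ⟨h0, fun h => h.1.not_ge nonneg'⟩,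
      ⟨h1, fun h => h.2.not_ge le_one'⟩, fun x hx y hy hxy hdisj => ?_⟩
    by_cases h : Disjoint (Ioo x y) K
    · exact hgap x hx.1 y hy.1 hxy h
    obtain ⟨k, hkxy, hk⟩ := not_disjoint_iff.1 h
    have hkab : k ∈ Ioo a b := by_contra fun h' => disjoint_left.1 hdisj hkxy ⟨hk, h'⟩
    have hxa : x = a := by
      refine le_antisymm (le_of_not_gt fun hax => hx.2 ⟨hax, hkxy.1.trans hkab.2⟩)
        (le_of_not_gt fun hxa => disjoint_left.1 hdisj ⟨hxa, hkab.1.trans hkxy.2⟩ ⟨ha, ?_⟩)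
      exact fun h => h.1.false
    have hyb : y = b := by
      refine le_antisymm
        (le_of_not_gt fun hby => disjoint_left.1 hdisj ⟨hkxy.1.trans hkab.2, hby⟩ ⟨hb, ?_⟩)
        (le_of_not_gt fun hyb => hy.2 ⟨hkab.1.trans hkxy.2, hyb⟩)
      exact fun h => h.2.false
    rw [hxa, hyb, heq]
  have hsub : K ⊆ K \ Ioo a b := hK.2 hK' sdiff_subset
  exact disjoint_left.2 fun k hk hkK => (hsub hkK).2 hk

theorem IsShortcut.dist_comp_floorIn_le [PseudoMetricSpace X] {K : Set I} (hK : IsShortcut γ K)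
    {u v : I} (huv : u ≤ v) (hb : Bornology.IsBounded (γ '' Icc u v)) :
    dist (γ (floorIn K u)) (γ (floorIn K v)) ≤ diam (γ '' Icc u v) := by
  obtain ⟨hcl, h0, h1, hgap⟩ := hK
  have hfu := floorIn_mem hcl h0 u
  have hfv := floorIn_mem hcl h0 v
  rcases le_or_gt (floorIn K v) u with hvu | huv'
  · rw [le_antisymm (floorIn_mono huv) (le_floorIn hfv.1 hvu), dist_self]
    exact diam_nonneg
  -- `γ (floorIn K u)` is also the value of `γ` at the first point of `K` after `u`
  set s := sInf (K ∩ Ici u)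
  have hs : s ∈ K ∩ Ici u := IsClosed.sInf_mem ⟨1, h1, le_one'⟩ (hcl.inter isClosed_Ici)
  have hsv : s ≤ floorIn K v := sInf_le ⟨hfv.1, huv'.le⟩
  have hgap_u : Disjoint (Ioo (floorIn K u) s) K := disjoint_left.2 fun k hk hkK =>
    (le_total k u).elim (fun hku => hk.1.not_ge (le_floorIn hkK hku))
      (fun huk => hk.2.not_ge (sInf_le ⟨hkK, huk⟩))
  rw [hgap _ hfu.1 _ hs.1 (hfu.2.trans hs.2) hgap_u]
  exact dist_le_diam_of_mem hb ⟨s, ⟨hs.2, hsv.trans hfv.2⟩, rfl⟩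
    ⟨_, ⟨huv'.le, hfv.2⟩, rfl⟩

theorem Minimal.comp_floorIn_eq_of_mem_Icc {K : Set I} (hK : Minimal (IsShortcut γ) K)
    {u v w : I} (hw : w ∈ Icc u v) (heq : γ (floorIn K u) = γ (floorIn K v)) :
    γ (floorIn K w) = γ (floorIn K u) := by
  obtain ⟨hcl, h0, -, -⟩ := hK.prop
  have hgap := hK.disjoint_Ioo_of_isShortcut (floorIn_mem hcl h0 u).1 (floorIn_mem hcl h0 v).1
    heq
  rcases (floorIn_mono hw.1 : floorIn K u ≤ floorIn K w).eq_or_lt with h | hlt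
  · rw [h]
  rcases (floorIn_mono hw.2 : floorIn K w ≤ floorIn K v).eq_or_lt with h | hlt'
  · rw [h, heq]
  · exact absurd (floorIn_mem hcl h0 w).1 (disjoint_left.1 hgap ⟨hlt, hlt'⟩)

end Shortcut

section Modulus

variable {X Y : Type*} [PseudoMetricSpace X] [PseudoMetricSpace Y]

theorem uniformContinuous_of_dist_le_diam_image_Icc {f : I → Y} {g : I → X}
    (hg : UniformContinuous g)
    (hfg : ∀ u v, u ≤ v → dist (f u) (f v) ≤ diam (g '' Icc u v)) : UniformContinuous f := by
  rw [Metric.uniformContinuous_iff] at hg ⊢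
  intro ε hε
  obtain ⟨δ, hδ, hg⟩ := hg _ (half_pos hε)
  have key : ∀ u v, u ≤ v → dist u v < δ → dist (f u) (f v) < ε := fun u v huv h => by
    refine (hfg u v huv).trans_lt ((diam_le_of_forall_dist_le (half_pos hε).le ?_).trans_lt
      (half_lt_self hε))
    rintro _ ⟨p, hp, rfl⟩ _ ⟨q, hq, rfl⟩
    exact (hg ((Real.dist_le_of_mem_uIcc (Icc_subset_uIcc hp) (Icc_subset_uIcc hq)).trans_lt
      h)).le
  refine ⟨δ, hδ, fun {u v} h => ?_⟩
  rcases le_total u v with huv | hvu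
  · exact key u v huv h
  · rw [dist_comm] at h ⊢
    exact key v u hvu h

end Modulus

section DiamSum

variable {X : Type*} [PseudoMetricSpace X] {C : I → X}

theorem diam_image_Icc_le_add (hC : Continuous C) (z : I) {u v : I} (huv : u ≤ v) :
    diam (C '' Icc z v) ≤ diam (C '' Icc z u) + diam (C '' Icc u v) := by
  rcases le_total z u with hzu | huz
  · rw [← Icc_union_Icc_eq_Icc hzu huv, image_union]
    simpa using diam_union (mem_image_of_mem C (right_mem_Icc.2 hzu))
      (mem_image_of_mem C (left_mem_Icc.2 huv))
  · exact (diam_mono (image_mono (Icc_subset_Icc_left huz))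
      ((isCompact_Icc.image hC).isBounded)).trans (le_add_of_nonneg_left diam_nonneg)

theorem diam_image_Icc_mono (hC : Continuous C) (z : I) :
    Monotone fun u => diam (C '' Icc z u) := fun _ _ huv =>
  diam_mono (image_mono (Icc_subset_Icc_right huv)) (isCompact_Icc.image hC).isBounded

theorem continuous_diam_image_Icc (hC : Continuous C) (z : I) :
    Continuous fun u => diam (C '' Icc z u) :=
  (uniformContinuous_of_dist_le_diam_image_Icc (CompactSpace.uniformContinuous_of_continuous hC)
    fun u v huv => by
      rw [Real.dist_eq, abs_sub_comm,
        abs_of_nonneg (sub_nonneg.2 (diam_image_Icc_mono hC z huv)), sub_le_iff_le_add']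
      exact diam_image_Icc_le_add hC z huv).continuous

noncomputable def diamSum (C : I → X) (e : ℕ → I) (u : I) : ℝ :=
  ∑' k, (1 / 2 : ℝ) ^ k * diam (C '' Icc (e k) u)

variable {e : ℕ → I}

theorem summable_diamSum (hC : Continuous C) (u : I) :
    Summable fun k => (1 / 2 : ℝ) ^ k * diam (C '' Icc (e k) u) :=
  .of_nonneg_of_le (fun _ => by positivity)
    (fun k => mul_le_mul_of_nonneg_left
      (diam_mono (image_subset_range _ _) (isCompact_range hC).isBounded) (by positivity))
    (summable_geometric_two.mul_right (diam (range C)))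

theorem continuous_diamSum (hC : Continuous C) : Continuous (diamSum C e) :=
  continuous_tsum (fun k => continuous_const.mul (continuous_diam_image_Icc hC (e k)))
    (summable_geometric_two.mul_right (diam (range C))) fun k u => by
      rw [Real.norm_of_nonneg (by positivity)]
      exact mul_le_mul_of_nonneg_left
        (diam_mono (image_subset_range _ _) (isCompact_range hC).isBounded) (by positivity)

theorem diamSum_mono (hC : Continuous C) : Monotone (diamSum C e) := fun u v huv =>
  Summable.tsum_le_tsum (fun k => mul_le_mul_of_nonneg_left (diam_image_Icc_mono hC _ huv)
    (by positivity)) (summable_diamSum hC u) (summable_diamSum hC v)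

theorem diamSum_zero : diamSum C e 0 = 0 := by
  have h : ∀ k, diam (C '' Icc (e k) 0) = 0 := fun k =>
    diam_subsingleton ((subsingleton_Icc_of_ge nonneg').image C)
  simp [diamSum, h]

theorem diamSum_eq_of_forall_eq (hC : Continuous C) {u v : I} (huv : u ≤ v)
    (hconst : ∀ w ∈ Icc u v, C w = C u) : diamSum C e u = diamSum C e v := by
  have h0 : diam (C '' Icc u v) = 0 := diam_subsingleton <| by
    rintro _ ⟨w, hw, rfl⟩ _ ⟨w', hw', rfl⟩
    rw [hconst w hw, hconst w' hw']
  refine tsum_congr fun k => congrArg _ (le_antisymm (diam_image_Icc_mono hC _ huv) ?_)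
  simpa [h0] using diam_image_Icc_le_add hC (e k) huv

end DiamSum

section Reparam

variable {X : Type*} [MetricSpace X] {C : I → X}

theorem diamSum_lt {e : ℕ → I} (hC : Continuous C) (he : DenseRange e) {u v : I} (huv : u ≤ v)
    (hne : C u ≠ C v) : diamSum C e u < diamSum C e v := by
  have huv' : u < v := huv.lt_of_ne fun h => hne (h ▸ rfl)
  -- a point `e k` just after `u`, where `C` still differs from `C v`
  have hopen : IsOpen (Ioo u v ∩ C ⁻¹' {C v}ᶜ) :=
    isOpen_Ioo.inter (isOpen_compl_singleton.preimage hC)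
  obtain ⟨k, hk, hkv⟩ := he.exists_mem_open hopen <| by
    have hu : u ∈ closure (Ioo u v) := by rw [closure_Ioo huv'.ne]; exact left_mem_Icc.2 huv
    rw [inter_comm]
    exact mem_closure_iff.1 hu _ (isOpen_compl_singleton.preimage hC) hne
  refine Summable.tsum_lt_tsum (i := k)
    (fun j => mul_le_mul_of_nonneg_left (diam_image_Icc_mono hC _ huv) (by positivity))
    ?_ (summable_diamSum hC u) (summable_diamSum hC v)
  rw [Icc_eq_empty (not_le.2 hk.1), image_empty, diam_empty, mul_zero]
  refine mul_pos (by positivity) ((dist_pos.2 hkv).trans_le (dist_le_diam_of_mem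
    (isCompact_Icc.image hC).isBounded ⟨e k, ⟨le_rfl, hk.2.le⟩, rfl⟩ ⟨v, ⟨hk.2.le, le_rfl⟩, rfl⟩))

theorem exists_reparam_of_fibers_ordConnected
    (hC : Continuous C) (hfib : ∀ ⦃u v⦄, u ≤ v → C u = C v → ∀ w ∈ Icc u v, C w = C u)
    (h01 : C 0 ≠ C 1) :
    ∃ n : I → I, Continuous n ∧ n 0 = 0 ∧ n 1 = 1 ∧ ∀ u v, n u = n v ↔ C u = C v := by
  obtain ⟨e, he⟩ := TopologicalSpace.exists_dense_seq I
  set h := diamSum C e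
  have hmono := diamSum_mono (e := e) hC
  have h0 : h 0 = 0 := diamSum_zero
  have h1 : 0 < h 1 := h0 ▸ diamSum_lt hC he nonneg' h01
  have hfib' : ∀ u v, u ≤ v → (h u = h v ↔ C u = C v) := fun u v huv =>
    ⟨fun heq => by_contra fun hne => (diamSum_lt hC he huv hne).ne heq,
      fun heq => diamSum_eq_of_forall_eq hC huv (hfib huv heq)⟩
  refine ⟨fun u => ⟨h u / h 1, div_mem (h0 ▸ hmono nonneg') h1.le (hmono le_one')⟩,
    ((continuous_diamSum hC).div_const _).subtype_mk _, by simp [h0], by simp [h1.ne'],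
    fun u v => ?_⟩
  rw [Subtype.mk.injEq, div_left_inj' h1.ne']
  rcases le_total u v with huv | hvu
  · exact hfib' u v huv
  · rw [eq_comm, @eq_comm _ (C u)]
    exact hfib' v u hvu

end Reparam

theorem exists_injective_path_of_fibers {X : Type*} [TopologicalSpace X] {C : I → X}
    (hC : Continuous C) {n : I → I} (hn : Continuous n) (hn0 : n 0 = 0) (hn1 : n 1 = 1)
    (hfib : ∀ u v, n u = n v ↔ C u = C v) :
    ∃ g : Path (C 0) (C 1), Function.Injective g ∧ range g ⊆ range C := by
  have hsurj : Function.Surjective n := fun ξ =>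
    intermediate_value_univ 0 1 hn (by rw [hn0, hn1]; exact ⟨nonneg', le_one'⟩)
  have hq : Topology.IsQuotientMap (⟨n, hn⟩ : C(I, I)) := hn.isClosedMap.isQuotientMap hn hsurj
  set G := hq.lift ⟨C, hC⟩ fun u v huv => (hfib u v).1 huv
  have hG : ∀ u, G (n u) = C u := fun u =>
    DFunLike.congr_fun (hq.lift_comp ⟨C, hC⟩ fun u v huv => (hfib u v).1 huv) u
  refine ⟨⟨G, by simpa [hn0] using hG 0, by simpa [hn1] using hG 1⟩, fun ξ₁ ξ₂ h => ?_, ?_⟩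
  · obtain ⟨u₁, rfl⟩ := hsurj ξ₁
    obtain ⟨u₂, rfl⟩ := hsurj ξ₂
    exact (hfib u₁ u₂).2 (by simpa [hG] using h)
  · rintro _ ⟨ξ, rfl⟩
    obtain ⟨u, rfl⟩ := hsurj ξ
    exact ⟨u, (hG u).symm⟩

theorem Path.exists_injective_range_subset {X : Type*} [MetricSpace X] {x y : X}
    (hxy : x ≠ y) (γ : Path x y) : ∃ g : Path x y, Function.Injective g ∧ range g ⊆ range γ := by
  obtain ⟨K, hK⟩ := exists_minimal_isShortcut γ.continuous
  obtain ⟨hcl, h0, h1, -⟩ := hK.prop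
  set C := γ ∘ floorIn K
  have hC : Continuous C := (uniformContinuous_of_dist_le_diam_image_Icc
    (CompactSpace.uniformContinuous_of_continuous γ.continuous) fun u v huv =>
      hK.prop.dist_comp_floorIn_le huv (isCompact_Icc.image γ.continuous).isBounded).continuous
  have hC0 : C 0 = x := by simp [C, floorIn_eq_self h0]
  have hC1 : C 1 = y := by simp [C, floorIn_eq_self h1]
  obtain ⟨n, hn, hn0, hn1, hfib⟩ := exists_reparam_of_fibers_ordConnected hC
    (fun u v _ heq w hw => hK.comp_floorIn_eq_of_mem_Icc hw heq) (hC0 ▸ hC1 ▸ hxy)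
  obtain ⟨g, hg, hgC⟩ := exists_injective_path_of_fibers hC hn hn0 hn1 hfib
  exact ⟨g.cast hC0.symm hC1.symm, hg, hgC.trans (range_comp_subset_range _ _)⟩

theorem StronglyConvex.mem_range_of_path {S : Type*} [MetricSpace S] {T : Set S}
    (hT : StronglyConvex T) {c s v : S} (hc : c ∈ T) (hv : v ∈ T) (hcv : c ≠ v) (α : Path c s)
    (hα : ∀ a, α a ∈ T → α a = c) (q : Path s v) : c ∈ range q := by
  obtain ⟨δ, hδ, hδR⟩ := (α.trans q).exists_injective_range_subset hcv
  have hδq : δ '' Ioi 0 ⊆ range q := by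
    rintro _ ⟨a, ha, rfl⟩
    rcases (Path.trans_range α q ▸ hδR ⟨a, rfl⟩ :) with ⟨b, hb⟩ | hq
    · have hδa : δ a = δ 0 := by rw [← hb, δ.source, hα b (hb ▸ hT c v δ hδ hc hv a)]
      exact absurd (hδ hδa) ha.ne'
    · exact hq
  have h0 : (0 : I) ∈ closure (Ioi 0) := by
    rw [closure_Ioi' ⟨1, zero_lt_one⟩]
    exact self_mem_Ici
  have hc : c ∈ closure (δ '' Ioi 0) := by
    simpa using mem_closure_image δ.continuous.continuousAt h0
  exact (isCompact_range q.continuous).isClosed.closure_subset_iff.2 hδq hc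

theorem cut_point_of_strongly_convex_general {S : Type*} [MetricSpace S]
    (T : Set S)
    (htwo : ∃ t₁ t₂ : S, t₁ ∈ T ∧ t₂ ∈ T ∧ t₁ ≠ t₂)
    (hconv : StronglyConvex T)
    (s t : S) (hs : s ∉ T) (p : Path s t)
    (t₁ : unitInterval) (ht₁ : p t₁ ∈ T ∧ ∀ a : unitInterval, p a ∈ T → t₁ ≤ a) :
    IsCutPoint (p t₁) ∧ ∃ c : S, IsCutPoint c := by
  obtain ⟨hcT, hmin⟩ := ht₁
  obtain ⟨v, hvT, hvc⟩ : ∃ v ∈ T, v ≠ p t₁ := by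
    obtain ⟨w₁, w₂, hw₁, hw₂, hw⟩ := htwo
    by_cases h : w₁ = p t₁
    · exact ⟨w₂, hw₂, h ▸ hw.symm⟩
    · exact ⟨w₁, hw₁, h⟩
  let α : Path (p t₁) s := (p.subpath t₁ 0).cast rfl p.source.symm
  have hα : ∀ a, α a ∈ T → α a = p t₁ := by
    intro a ha
    obtain ⟨b, hb, hba⟩ : α a ∈ p '' Icc 0 t₁ := by
      rw [← p.range_subpath_of_ge t₁ 0 nonneg']
      exact ⟨a, rfl⟩
    rw [← hba] at ha ⊢
    rw [le_antisymm hb.2 (hmin b ha)]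
  have hcut : IsCutPoint (p t₁) := ⟨s, v, fun h => hs (h ▸ hcT), hvc, fun ⟨q, hq⟩ =>
    let ⟨a, ha⟩ := hconv.mem_range_of_path hcT hvT hvc.symm α hα q
    hq a ha⟩
  exact ⟨hcut, _, hcut⟩

/-- a path connected metric space containing a proper closed strongly
convex subspace with at least two points has a cut point; specifically, for a simple
path `p` from `s ∉ T` to `t ∈ T`, the first point `p t₁` of `p` in `T` is a cut point. -/
theorem cut_point_of_strongly_convex {S : Type*} [MetricSpace S] [PathConnectedSpace S]
    (T : Set S) (hclosed : IsClosed T) (hproper : T ≠ Set.univ)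
    (htwo : ∃ t₁ t₂ : S, t₁ ∈ T ∧ t₂ ∈ T ∧ t₁ ≠ t₂)
    (hconv : StronglyConvex T)
    (s t : S) (hs : s ∉ T) (ht : t ∈ T) (p : Path s t) (hinj : Function.Injective ⇑p)
    (t₁ : unitInterval) (ht₁ : p t₁ ∈ T ∧ ∀ a : unitInterval, p a ∈ T → t₁ ≤ a) :
    IsCutPoint (p t₁) ∧ ∃ c : S, IsCutPoint c :=
  cut_point_of_strongly_convex_general T htwo hconv s t hs p t₁ ht₁
end
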